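/- arXiv:2209.02060 — 8 statements merged into one kernel-verified Lean document; each statement's English description precedes it below -/
import Mathlib

section
/- (Eckart–Young, Frobenius norm) Let X be a real m×n matrix with singular values σ₁ ≥ σ₂ ≥ … ≥ σ_{min(m,n)} ≥ 0, and let 0 ≤ r ≤ min(m,n). Then for every m×n matrix Y with rank(Y) ≤ r one has ‖X − Y‖_F² ≥ Σ_{i=r+1}^{min(m,n)} σ_i², and there exists a matrix Y of rank at most r attaining this bound (a rank-r truncated SVD of X). -/
/-!
Write `‖M‖_F² = tr (Mᵀ M)` and diagonalise `Xᵀ X = U diag(σ²) Uᵀ` with `U` orthogonal.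
If `rank Y ≤ r`, the orthogonal projection `P` onto `ker Y` has trace `≥ n - r` and
`(X - Y) P = X P`, so `‖X - Y‖_F² ≥ ‖X P‖_F² = Σ σᵢ² wᵢ` with weights `wᵢ = (Uᵀ P U)ᵢᵢ ∈ [0, 1]`
summing to `tr P ≥ n - r`; such a weighted sum of the nonincreasing `σᵢ²` is at least the sum of
the last `n - r` of them. Equality holds for `Y = X (1 - Q)`, where `Q` projects onto the
eigenvectors of the last `n - r` eigenvalues. The `σᵢ` with `i ≥ min m n` vanish because
`rank (Xᵀ X) ≤ m`.
-/

open Matrix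

/-- The Frobenius norm of a real matrix. -/
noncomputable def mfrob {m n : Type*} [Fintype m] [Fintype n] (X : Matrix m n ℝ) : ℝ :=
  Real.sqrt (∑ i, ∑ j, (X i j) ^ 2)

theorem Antitone.eq_zero_of_card_ne_zero_le {n k : ℕ} {f : Fin n → ℝ} (hf : Antitone f)
    (hf₀ : 0 ≤ f) (hk : Fintype.card {i // f i ≠ 0} ≤ k) {i : Fin n} (hi : k ≤ i) : f i = 0 := by
  by_contra hfi
  have hsub : Finset.Iic i ⊆ Finset.univ.filter (f · ≠ 0) := fun j hj ↦ by
    simp only [Finset.mem_filter, Finset.mem_univ, true_and]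
    exact (((hf₀ i).lt_of_ne' hfi).trans_le (hf (Finset.mem_Iic.mp hj))).ne'
  have := Finset.card_le_card hsub
  rw [Fin.card_Iic, ← Fintype.card_subtype] at this
  omega

theorem Antitone.sum_tail_le_sum_mul {n r : ℕ} {f s : Fin n → ℝ} (hf : Antitone f)
    (hf₀ : 0 ≤ f) (hs₀ : 0 ≤ s) (hs₁ : s ≤ 1) (hs : (n : ℝ) - r ≤ ∑ i, s i) :
    (∑ i : Fin n, if r ≤ (i : ℕ) then f i else 0) ≤ ∑ i, f i * s i := by
  rcases le_or_gt n r with hnr | hrn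
  · rw [Finset.sum_eq_zero fun i _ ↦ if_neg (by omega)]
    exact Finset.sum_nonneg fun i _ ↦ mul_nonneg (hf₀ i) (hs₀ i)
  set ρ : Fin n := ⟨r, hrn⟩
  -- Compare every term with the threshold value `f ρ`, which dominates the tail and is
  -- dominated by the head.
  have hterm (i : Fin n) : f ρ * s i - f ρ * (if r ≤ (i : ℕ) then 1 else 0) ≤
      f i * s i - if r ≤ (i : ℕ) then f i else 0 := by
    split_ifs with hi
    · have hfi : f i ≤ f ρ := hf (show ρ ≤ i from hi)
      linarith [mul_nonneg (sub_nonneg.mpr hfi) (sub_nonneg.mpr (show s i ≤ 1 from hs₁ i))]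
    · have hfi : f ρ ≤ f i := hf (show i ≤ ρ from Fin.le_def.mpr (by simp only [ρ]; omega))
      linarith [mul_nonneg (sub_nonneg.mpr hfi) (hs₀ i)]
  have hcount : (∑ i : Fin n, if r ≤ (i : ℕ) then (1 : ℝ) else 0) = n - r := by
    have := Finset.card_filter_add_card_filter_not (s := Finset.univ) fun i : Fin n ↦ (i : ℕ) < r
    simp only [not_lt, Fin.card_filter_val_lt, Finset.card_univ, Fintype.card_fin] at this
    rw [Finset.sum_boole, eq_sub_iff_add_eq]
    norm_cast
    omega
  have hsum := Finset.sum_le_sum fun i (_ : i ∈ Finset.univ) ↦ hterm i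
  rw [Finset.sum_sub_distrib, Finset.sum_sub_distrib, ← Finset.mul_sum, ← Finset.mul_sum,
    hcount] at hsum
  linarith [mul_nonneg (hf₀ ρ) (sub_nonneg.mpr hs)]

section StarProjection

variable {m n : Type*} [Fintype m] [Fintype n] {P : Matrix n n ℝ}

theorem mfrob_sq (M : Matrix m n ℝ) : mfrob M ^ 2 = (Mᵀ * M).trace := by
  rw [mfrob, Real.sq_sqrt (by positivity), Finset.sum_comm]
  simp only [trace, diag, mul_apply, transpose_apply, sq]

theorem IsStarProjection.transpose_eq (hP : IsStarProjection P) : Pᵀ = P := by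
  simpa [star_eq_conjTranspose] using hP.isSelfAdjoint.star_eq

theorem IsStarProjection.mfrob_mul_sq (hP : IsStarProjection P) (M : Matrix m n ℝ) :
    mfrob (M * P) ^ 2 = (Mᵀ * M * P).trace := by
  rw [mfrob_sq, transpose_mul, hP.transpose_eq, Matrix.mul_assoc, trace_mul_comm,
    Matrix.mul_assoc, Matrix.mul_assoc, hP.isIdempotentElem.eq, ← Matrix.mul_assoc]

theorem IsStarProjection.mfrob_mul_le [DecidableEq n] (hP : IsStarProjection P)
    (M : Matrix m n ℝ) : mfrob (M * P) ≤ mfrob M := by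
  have hsplit : mfrob M ^ 2 = mfrob (M * P) ^ 2 + mfrob (M * (1 - P)) ^ 2 := by
    rw [hP.mfrob_mul_sq, hP.one_sub.mfrob_mul_sq, mfrob_sq, Matrix.mul_sub, Matrix.mul_one,
      trace_sub, add_sub_cancel]
  exact le_of_sq_le_sq (by linarith [sq_nonneg (mfrob (M * (1 - P)))]) (Real.sqrt_nonneg _)

theorem IsStarProjection.diag_nonneg (hP : IsStarProjection P) (i : n) : 0 ≤ P i i := by
  rw [← hP.isIdempotentElem.eq, ← congrArg (· * P) hP.transpose_eq]
  simp only [mul_apply, transpose_apply]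
  exact Finset.sum_nonneg fun k _ ↦ mul_self_nonneg _

theorem IsStarProjection.diag_le_one [DecidableEq n] (hP : IsStarProjection P) (i : n) :
    P i i ≤ 1 := by
  simpa using hP.one_sub.diag_nonneg i

theorem Matrix.isStarProjection_diagonal [DecidableEq n] {R : Type*} [Ring R] [StarRing R]
    {d : n → R} (hd : ∀ i, IsStarProjection (d i)) : IsStarProjection (diagonal d) where
  isIdempotentElem := by
    rw [IsIdempotentElem, diagonal_mul_diagonal]
    exact congrArg diagonal (funext fun i ↦ (hd i).isIdempotentElem.eq)
  isSelfAdjoint := by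
    rw [IsSelfAdjoint, star_eq_conjTranspose, diagonal_conjTranspose]
    exact congrArg diagonal (funext fun i ↦ (hd i).isSelfAdjoint.star_eq)

theorem Matrix.exists_isStarProjection_mul_eq_zero [DecidableEq n] (Y : Matrix m n ℝ) :
    ∃ P : Matrix n n ℝ, IsStarProjection P ∧ Y * P = 0 ∧
      P.trace = Fintype.card n - Y.rank := by
  set K := LinearMap.ker (toEuclideanLin Y)
  set P := (toEuclideanCLM (𝕜 := ℝ) (n := n)).symm K.starProjection
  have hPK : toEuclideanLin P = K.starProjection := by
    rw [← coe_toEuclideanCLM_eq_toEuclideanLin]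
    simp [P]
  refine ⟨P, (isStarProjection_starProjection (U := K)).map
    (toEuclideanCLM (𝕜 := ℝ) (n := n)).symm.toStarAlgHom, ?_, ?_⟩
  · apply toEuclideanLin.injective
    ext v : 1
    have := K.starProjection_apply_mem v
    rw [LinearMap.mem_ker, ← ContinuousLinearMap.coe_coe, ← hPK] at this
    simpa [toLpLin_apply, mulVec_mulVec] using this
  · have hproj : LinearMap.IsProj K (K.starProjection : EuclideanSpace ℝ n →ₗ[ℝ] _) :=
      ⟨K.starProjection_apply_mem, fun _ ↦ K.starProjection_eq_self_iff.mpr⟩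
    have hrank : Y.rank + Module.finrank ℝ K = Fintype.card n := by
      have := (toEuclideanLin Y).finrank_range_add_finrank_ker
      rwa [toEuclideanLin_eq_toLin_orthonormal, ← rank_eq_finrank_range_toLin,
        finrank_euclideanSpace] at this
    rw [← LinearMap.toMatrix_toLin (EuclideanSpace.basisFun n ℝ).toBasis
      (EuclideanSpace.basisFun n ℝ).toBasis P, ← toEuclideanLin_eq_toLin_orthonormal, hPK,
      ← LinearMap.trace_eq_matrix_trace, hproj.trace, eq_sub_iff_add_eq, ← hrank]
    push_cast
    ring

end StarProjection

section Spectral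

variable {n : Type*} [Fintype n] [DecidableEq n]

theorem Matrix.IsHermitian.exists_unitary_eq_conjStarAlgAut_diagonal_comp {𝕜 : Type*} [RCLike 𝕜]
    {A : Matrix n n 𝕜} (hA : A.IsHermitian) (e : Equiv.Perm n) :
    ∃ U : unitary (Matrix n n 𝕜),
      A = Unitary.conjStarAlgAut 𝕜 _ U (diagonal (RCLike.ofReal ∘ hA.eigenvalues ∘ e)) := by
  set V : Matrix n n 𝕜 := (hA.eigenvectorUnitary : Matrix n n 𝕜)
  have hstar : star (V.submatrix id e) = (star V).submatrix e id := by
    simp only [star_eq_conjTranspose, conjTranspose_submatrix]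
  have hW : V.submatrix id e ∈ unitary (Matrix n n 𝕜) := by
    rw [← unitaryGroup, mem_unitaryGroup_iff', hstar,
      ← submatrix_mul _ _ _ _ _ Function.bijective_id,
      Unitary.star_mul_self_of_mem hA.eigenvectorUnitary.2, submatrix_one_equiv]
  refine ⟨⟨_, hW⟩, ?_⟩
  rw [Unitary.conjStarAlgAut_apply, hstar, ← Function.comp_assoc, ← submatrix_diagonal_equiv,
    submatrix_mul_equiv, submatrix_mul_equiv, submatrix_id_id]
  exact hA.spectral_theorem

theorem Matrix.trace_conjStarAlgAut_diagonal_mul (U : unitary (Matrix n n ℝ)) (d : n → ℝ)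
    (P : Matrix n n ℝ) :
    (Unitary.conjStarAlgAut ℝ _ U (diagonal d) * P).trace =
      ∑ i, d i * (Unitary.conjStarAlgAut ℝ _ U).symm P i i := by
  rw [Unitary.conjStarAlgAut_apply, Unitary.conjStarAlgAut_symm_apply,
    Matrix.mul_assoc (_ * _), Matrix.mul_assoc (U : Matrix n n ℝ),
    trace_mul_comm (U : Matrix n n ℝ), Matrix.mul_assoc (diagonal d)]
  simp only [trace, diag, diagonal_mul]

theorem Matrix.card_ne_zero_le_of_transpose_mul_self_eq {m : Type*} [Fintype m]
    {X : Matrix m n ℝ} {U : unitary (Matrix n n ℝ)} {d : n → ℝ}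
    (hXX : Xᵀ * X = Unitary.conjStarAlgAut ℝ _ U (diagonal d)) :
    Fintype.card {i // d i ≠ 0} ≤ Fintype.card m := by
  rw [← rank_diagonal, ← (Unitary.conjStarAlgAut ℝ _ U).symm_apply_apply (diagonal d), ← hXX]
  calc _ ≤ (Xᵀ * X).rank := (rank_mul_le_left _ _).trans (rank_mul_le_right _ _)
    _ ≤ Fintype.card m := (rank_transpose_mul_self X).trans_le X.rank_le_card_height

end Spectral

section EckartYoung

variable {m : Type*} [Fintype m] {n : ℕ} {X : Matrix m (Fin n) ℝ}
  {U : unitary (Matrix (Fin n) (Fin n) ℝ)} {d : Fin n → ℝ}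

theorem sum_tail_le_mfrob_sub_sq (hXX : Xᵀ * X = Unitary.conjStarAlgAut ℝ _ U (diagonal d))
    (hd : Antitone d) (hd₀ : 0 ≤ d) {r : ℕ} {Y : Matrix m (Fin n) ℝ} (hY : Y.rank ≤ r) :
    (∑ i : Fin n, if r ≤ (i : ℕ) then d i else 0) ≤ mfrob (X - Y) ^ 2 := by
  obtain ⟨P, hP, hYP, hPtr⟩ := exists_isStarProjection_mul_eq_zero Y
  set Q : Matrix (Fin n) (Fin n) ℝ := (Unitary.conjStarAlgAut ℝ _ U).symm P
  have hQ : IsStarProjection Q := hP.map (Unitary.conjStarAlgAut ℝ _ U).symm.toStarAlgHom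
  have hQtr : ∑ i, Q i i = P.trace := trace_map' _ P
  calc _ ≤ ∑ i, d i * Q i i :=
        hd.sum_tail_le_sum_mul hd₀ hQ.diag_nonneg hQ.diag_le_one
          (by rw [hQtr, hPtr, Fintype.card_fin]; gcongr)
    _ = (Xᵀ * X * P).trace := by rw [hXX, trace_conjStarAlgAut_diagonal_mul]
    _ = mfrob ((X - Y) * P) ^ 2 := by rw [Matrix.sub_mul, hYP, sub_zero, hP.mfrob_mul_sq]
    _ ≤ mfrob (X - Y) ^ 2 := pow_le_pow_left₀ (Real.sqrt_nonneg _) (hP.mfrob_mul_le _) 2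

theorem exists_rank_le_mfrob_sub_sq_eq_sum_tail
    (hXX : Xᵀ * X = Unitary.conjStarAlgAut ℝ _ U (diagonal d)) {r : ℕ} (hr : r ≤ n) :
    ∃ Y : Matrix m (Fin n) ℝ, Y.rank ≤ r ∧
      mfrob (X - Y) ^ 2 = ∑ i : Fin n, if r ≤ (i : ℕ) then d i else 0 := by
  set χ : Fin n → ℝ := fun i ↦ if r ≤ (i : ℕ) then 1 else 0
  set Q : Matrix (Fin n) (Fin n) ℝ := Unitary.conjStarAlgAut ℝ _ U (diagonal χ)
  have hQ : IsStarProjection Q :=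
    (isStarProjection_diagonal fun i ↦ by by_cases hi : r ≤ (i : ℕ) <;> simp [χ, hi]).map
      (Unitary.conjStarAlgAut ℝ _ U).toStarAlgHom
  refine ⟨X * (1 - Q), ?_, ?_⟩
  · have h1Q : 1 - Q = Unitary.conjStarAlgAut ℝ _ U (diagonal (1 - χ)) := by
      rw [show diagonal (1 - χ) = 1 - diagonal χ by rw [← diagonal_one, diagonal_sub]; rfl,
        map_sub, map_one]
    have hsupp (i : Fin n) : (1 - χ) i ≠ 0 ↔ (i : ℕ) < r := by
      by_cases hi : r ≤ (i : ℕ) <;> simp [χ, hi]; omega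
    calc (X * (1 - Q)).rank ≤ (diagonal (1 - χ)).rank := by
          rw [h1Q, Unitary.conjStarAlgAut_apply]
          exact (rank_mul_le_right _ _).trans
            ((rank_mul_le_left _ _).trans (rank_mul_le_right _ _))
      _ = r := by
          rw [rank_diagonal, Fintype.card_subtype, Finset.filter_congr fun i _ ↦ hsupp i,
            Fin.card_filter_val_lt]
          omega
  · rw [Matrix.mul_sub, Matrix.mul_one, sub_sub_cancel, hQ.mfrob_mul_sq, hXX,
      trace_conjStarAlgAut_diagonal_mul, StarAlgEquiv.symm_apply_apply]
    simp [χ]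

end EckartYoung

/-- **Eckart–Young theorem (Frobenius norm).**
Let `X` be a real `m × n` matrix and let `σ` be its singular values listed in nonincreasing
order, i.e. the nonnegative square roots of the eigenvalues of `Xᵀ * X` (there are `n` of them,
of which at most `min m n` are nonzero).  Then for `0 ≤ r ≤ min m n` and every matrix `Y` of
rank at most `r` one has `‖X - Y‖_F² ≥ Σ_{i = r+1}^{min(m,n)} σ_i²`, and there exists a matrix
of rank at most `r` attaining this bound. -/
theorem eckart_young_frobenius (m n r : ℕ) (hr : r ≤ min m n)
    (X : Matrix (Fin m) (Fin n) ℝ)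
    (hH : (Xᵀ * X).IsHermitian)
    (σ : Fin n → ℝ)
    (hσnonneg : ∀ i, 0 ≤ σ i)
    (hσmono : ∀ i j : Fin n, i ≤ j → σ j ≤ σ i)
    (hσeig : ∃ e : Equiv.Perm (Fin n), ∀ i, σ i ^ 2 = hH.eigenvalues (e i)) :
    (∀ Y : Matrix (Fin m) (Fin n) ℝ, Y.rank ≤ r →
      (∑ i : Fin n, if r ≤ (i : ℕ) ∧ (i : ℕ) < min m n then σ i ^ 2 else 0) ≤
        mfrob (X - Y) ^ 2) ∧
    (∃ Y : Matrix (Fin m) (Fin n) ℝ, Y.rank ≤ r ∧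
      mfrob (X - Y) ^ 2 =
        ∑ i : Fin n, if r ≤ (i : ℕ) ∧ (i : ℕ) < min m n then σ i ^ 2 else 0) := by
  obtain ⟨e, he⟩ := hσeig
  obtain ⟨U, hU⟩ := hH.exists_unitary_eq_conjStarAlgAut_diagonal_comp e
  have hXX : Xᵀ * X = Unitary.conjStarAlgAut ℝ _ U (diagonal fun i ↦ σ i ^ 2) := by
    rw [hU]
    congr
    exact funext fun i ↦ (he i).symm
  have hd : Antitone fun i ↦ σ i ^ 2 := fun i j hij ↦
    pow_le_pow_left₀ (hσnonneg j) (hσmono i j hij) 2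
  have hd₀ : 0 ≤ fun i ↦ σ i ^ 2 := fun i ↦ sq_nonneg (σ i)
  have htail : (∑ i : Fin n, if r ≤ (i : ℕ) ∧ (i : ℕ) < min m n then σ i ^ 2 else 0) =
      ∑ i : Fin n, if r ≤ (i : ℕ) then σ i ^ 2 else 0 := by
    refine Finset.sum_congr rfl fun i _ ↦ ?_
    have hcard := card_ne_zero_le_of_transpose_mul_self_eq hXX
    rw [Fintype.card_fin] at hcard
    by_cases hi : (i : ℕ) < min m n
    · simp [hi]
    · simp [hi, hd.eq_zero_of_card_ne_zero_le hd₀ hcard (by omega : m ≤ (i : ℕ))]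
  rw [htail]
  exact ⟨fun Y hY ↦ sum_tail_le_mfrob_sub_sq hXX hd hd₀ hY,
    exists_rank_le_mfrob_sub_sq_eq_sum_tail hXX (hr.trans (min_le_right m n))⟩
end

section
/- Let X ∈ ℝ^{n₁×…×n_d} be a d-dimensional tensor (d ≥ 2) with tensor-train rank (r₁,…,r_{d−1}), i.e., rank(X_{<k>}) = r_k for each 1 ≤ k ≤ d−1. Then there exist matrices G₁ ∈ ℝ^{n₁×r₁} and G_d ∈ ℝ^{r_{d−1}×n_d} and three-dimensional tensors G_k ∈ ℝ^{r_{k−1}×n_k×r_k} for 2 ≤ k ≤ d−1 such that X(i₁,…,i_d) = Σ_{α₁,…,α_{d−1}} G₁(i₁,α₁) G₂(α₁,i₂,α₂) ⋯ G_{d−1}(α_{d−2},i_{d−1},α_{d−1}) G_d(α_{d−1},i_d) for all indices, where each α_k ranges over {1,…,r_k}. -/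
/-!
The row space `W_t` of the unfolding `X_{<t>}`, seen as a space of functions of the trailing
indices `(i_{t+1}, …, i_d)`, has dimension `r_t`, and fixing the next index `i_{t+1}` maps
`W_t` into `W_{t+1}`. Take spanning families of size `r_t` of the `W_t`, with `X` itself at
`t = 0` and the constant `1` at `t = d`. Every slice of a member of the family at bond `t`
expands in the family at bond `t + 1`; the expansion coefficients are the cores, and
substituting the expansions into one another telescopes to the tensor-train formula.
-/

/-- The matricization of a `d`-dimensional tensor `X` splitting the indices after position `k`
(0-based): for `k : Fin (d-1)`, `matricize n X k.val` is the `(k+1)`-st matricization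
`X_{<k+1>}` in 1-based notation. -/
def matricize {d : ℕ} (n : Fin d → ℕ) (X : (∀ k, Fin (n k)) → ℝ) (k : ℕ) :
    Matrix (∀ j : {j : Fin d // j.val ≤ k}, Fin (n j.1))
      (∀ j : {j : Fin d // k < j.val}, Fin (n j.1)) ℝ :=
  Matrix.of fun row col =>
    X (fun j => if h : j.val ≤ k then row ⟨j, h⟩ else col ⟨j, Nat.lt_of_not_le h⟩)

/-- The bond dimensions of a tensor-train decomposition with TT-ranks `r = (r₁, …, r_{d-1})`:
the `b`-th bond (for `b : Fin (d+1)`) has dimension `r b` in the interior (`1 ≤ b ≤ d-1`) and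
dimension `1` at the two boundaries, so that the first and last cores are matrices
`G₁ ∈ ℝ^{n₁ × r₁}` and `G_d ∈ ℝ^{r_{d-1} × n_d}`. -/
def ttDims (d : ℕ) (r : Fin (d - 1) → ℕ) : Fin (d + 1) → ℕ :=
  fun b => if h : 1 ≤ b.val ∧ b.val ≤ d - 1 then r ⟨b.val - 1, by omega⟩ else 1

/-- Evaluation of a tensor train with bond dimensions `ρ` and cores
`G k ∈ ℝ^{ρ_k × n_k × ρ_{k+1}}` at a multi-index `i`:
`Σ_{α₁,…,α_{d-1}} G₁(i₁,α₁) G₂(α₁,i₂,α₂) ⋯ G_d(α_{d-1},i_d)` (the boundary bonds have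
dimension 1, so the sum effectively ranges over the interior bond indices only). -/
noncomputable def ttEval {d : ℕ} (n : Fin d → ℕ) (ρ : Fin (d + 1) → ℕ)
    (G : ∀ k : Fin d, Fin (ρ k.castSucc) → Fin (n k) → Fin (ρ k.succ) → ℝ)
    (i : ∀ k, Fin (n k)) : ℝ :=
  ∑ α : ∀ b : Fin (d + 1), Fin (ρ b), ∏ k : Fin d, G k (α k.castSucc) (i k) (α k.succ)

theorem Fin.sum_pi_prod_mul_last_eq_sum_zero {R : Type*} [CommSemiring R] {m : ℕ}
    {ι : Fin (m + 1) → Type*} [∀ b, Fintype (ι b)]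
    (T : ∀ k : Fin m, ι k.castSucc → ι k.succ → R) (u : ∀ b, ι b → R)
    (hu : ∀ k a, u k.castSucc a = ∑ c, T k a c * u k.succ c) :
    ∑ α : ∀ b, ι b, (∏ k, T k (α k.castSucc) (α k.succ)) * u (Fin.last m) (α (Fin.last m))
      = ∑ a, u 0 a := by
  induction m with
  | zero => exact Fintype.sum_equiv (Equiv.piUnique (α := Fin 1) ι) _ _ fun _ => by simp
  | succ m ih =>
    rw [← (Fin.snocEquiv ι).sum_comp, Fintype.sum_prod_type_right]
    calc _ = ∑ α : ∀ b : Fin (m + 1), ι b.castSucc,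
          (∏ k : Fin m, T k.castSucc (α k.castSucc) (α k.succ)) *
            u (Fin.last m).castSucc (α (Fin.last m)) := by
          refine Fintype.sum_congr _ _ fun α => ?_
          simp only [Fin.prod_univ_castSucc, hu (Fin.last m), Finset.mul_sum, mul_assoc]
          refine Fintype.sum_congr _ _ fun c => ?_
          have snoc_succ (k : Fin m) : Fin.snoc (α := ι) α c k.castSucc.succ = α k.succ :=
            Fin.snoc_castSucc (i := k.succ) ..
          have snoc_last : Fin.snoc (α := ι) α c (Fin.last m).succ = c := Fin.snoc_last ..
          simp only [Fin.snocEquiv_apply, Fin.snoc_castSucc, Fin.snoc_last, snoc_succ, snoc_last]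
          rfl
      _ = _ := ih (fun k => T k.castSucc) (fun b => u b.castSucc) fun k a => by
          exact hu k.castSucc a

theorem exists_ttEval_eq_of_update_mem_span {d : ℕ} {n : Fin d → ℕ} {ρ : Fin (d + 1) → ℕ}
    (V : ∀ b, Fin (ρ b) → (∀ k, Fin (n k)) → ℝ)
    (hV : ∀ k a y, (fun i => V k.castSucc a (Function.update i k y)) ∈
      Submodule.span ℝ (Set.range (V k.succ)))
    (hlast : ∀ c, V (Fin.last d) c = 1) :
    ∃ G, ∀ i, ttEval n ρ G i = ∑ a, V 0 a i := by
  choose G hG using fun k a y => (Submodule.mem_span_range_iff_exists_fun ℝ).1 (hV k a y)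
  refine ⟨G, fun i => ?_⟩
  have hstep (k : Fin d) (a : Fin (ρ k.castSucc)) :
      V k.castSucc a i = ∑ c, G k a (i k) c * V k.succ c i := by
    simpa [Function.update_eq_self] using (congrFun (hG k a (i k)) i).symm
  simpa [ttEval, hlast] using
    Fin.sum_pi_prod_mul_last_eq_sum_zero (fun k a c => G k a (i k) c) (fun b a => V b a i) hstep

section Unfolding

variable {d : ℕ} {β : Fin d → Type*}

def splice (t : ℕ) (p i : ∀ k, β k) : ∀ k, β k :=
  fun k => if k.val < t then p k else i k

theorem splice_zero (p i : ∀ k, β k) : splice 0 p i = i :=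
  funext fun k => if_neg k.val.not_lt_zero

theorem splice_of_le {t : ℕ} (h : d ≤ t) (p i : ∀ k, β k) : splice t p i = p :=
  funext fun k => if_pos (k.isLt.trans_le h)

theorem splice_update (k : Fin d) (p i : ∀ k, β k) (y : β k) :
    splice k.val p (Function.update i k y) = splice (k.val + 1) (Function.update p k y) i := by
  funext j
  rcases eq_or_ne j k with rfl | hj
  · simp [splice]
  · have : j.val ≠ k.val := Fin.val_ne_of_ne hj
    simp only [splice, Function.update_of_ne hj]
    split_ifs <;> first | rfl | omega

variable {R : Type*} [CommSemiring R]

/-- The row space of the unfolding `X_{<t>}`, realised inside the functions of the whole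
multi-index (its members ignore the first `t` coordinates); `unfoldingSpace X 0 = span {X}`. -/
def unfoldingSpace (X : (∀ k, β k) → R) (t : ℕ) : Submodule R ((∀ k, β k) → R) :=
  Submodule.span R (Set.range fun p i => X (splice t p i))

theorem update_mem_unfoldingSpace {X : (∀ k, β k) → R} {k : Fin d} {f : (∀ k, β k) → R}
    (hf : f ∈ unfoldingSpace X k.val) (y : β k) :
    (fun i => f (Function.update i k y)) ∈ unfoldingSpace X (k.val + 1) := by
  let L := LinearMap.funLeft R R fun i : ∀ k, β k => Function.update i k y
  have hle : unfoldingSpace X k.val ≤ (unfoldingSpace X (k.val + 1)).comap L := by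
    refine Submodule.span_le.2 ?_
    rintro _ ⟨p, rfl⟩
    exact Submodule.subset_span ⟨Function.update p k y, funext fun i => by
      simp [L, LinearMap.funLeft, splice_update]⟩
  exact hle hf

theorem self_mem_unfoldingSpace_zero [∀ k, Nonempty (β k)] (X : (∀ k, β k) → R) :
    X ∈ unfoldingSpace X 0 :=
  Submodule.subset_span ⟨Classical.arbitrary _, by simp [splice_zero]⟩

theorem unfoldingSpace_le_span_one {t : ℕ} (h : d ≤ t) (X : (∀ k, β k) → R) :
    unfoldingSpace X t ≤ Submodule.span R {1} := by
  refine Submodule.span_le.2 ?_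
  rintro _ ⟨p, rfl⟩
  exact Submodule.mem_span_singleton.2 ⟨X p, funext fun i => by simp [splice_of_le h]⟩

end Unfolding

theorem finrank_unfoldingSpace_succ {d : ℕ} {n : Fin d → ℕ} [∀ k, Nonempty (Fin (n k))]
    (X : (∀ k, Fin (n k)) → ℝ) (t : ℕ) :
    Module.finrank ℝ (unfoldingSpace X (t + 1)) = (matricize n X t).rank := by
  let P := LinearMap.funLeft ℝ ℝ (Subtype.restrict (β := fun k => Fin (n k)) (t < ·.val))
  have hP : Function.Injective P :=
    LinearMap.funLeft_injective_of_surjective _ _ _ (Subtype.surjective_restrict _)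
  have hspace : unfoldingSpace X (t + 1) =
      (Submodule.span ℝ (Set.range (matricize n X t).row)).map P := by
    rw [Submodule.map_span, ← Set.range_comp,
      ← (Subtype.surjective_restrict (β := fun k => Fin (n k)) (·.val ≤ t)).range_comp]
    refine congrArg (fun f => Submodule.span ℝ (Set.range f))
      (funext fun p => funext fun i => ?_)
    change X (splice (t + 1) p i) = X fun j => if j.val ≤ t then p j else i j
    exact congrArg X (funext fun j => if_congr Nat.lt_add_one_iff rfl rfl)
  rw [hspace, Matrix.rank_eq_finrank_span_row, (Submodule.equivMapOfInjective P hP _).finrank_eq]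

theorem exists_spanning_family_unfoldingSpace {d : ℕ} (hd : 0 < d) {n : Fin d → ℕ} [∀ k, Nonempty (Fin (n k))]
    {X : (∀ k, Fin (n k)) → ℝ} {r : Fin (d - 1) → ℕ}
    (hrank : ∀ k : Fin (d - 1), (matricize n X k.val).rank = r k) (b : Fin (d + 1)) :
    ∃ V : Fin (ttDims d r b) → (∀ k, Fin (n k)) → ℝ,
      (b.val < d → ∀ a, V a ∈ unfoldingSpace X b.val) ∧
      (0 < b.val → unfoldingSpace X b.val ≤ Submodule.span ℝ (Set.range V)) ∧
      (b.val = 0 → V = fun _ => X) ∧ (b.val = d → V = fun _ => 1) := by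
  rcases Nat.eq_zero_or_pos b.val with hb | hb
  · exact ⟨fun _ => X, fun _ _ => hb ▸ self_mem_unfoldingSpace_zero X, by omega, fun _ => rfl,
      by omega⟩
  rcases b.is_le.eq_or_lt with hb' | hb'
  · have hone : ttDims d r b = 1 := dif_neg (by omega)
    have : Nonempty (Fin (ttDims d r b)) := ⟨⟨0, by omega⟩⟩
    refine ⟨fun _ => 1, by omega, fun _ => ?_, by omega, fun _ => rfl⟩
    rw [Set.range_const]
    exact unfoldingSpace_le_span_one hb'.ge X
  obtain ⟨t, ht⟩ : ∃ t, b.val = t + 1 := ⟨b.val - 1, by omega⟩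
  have hdim : Module.finrank ℝ (unfoldingSpace X b.val) = ttDims d r b := by
    rw [ht, finrank_unfoldingSpace_succ, hrank ⟨t, by omega⟩, ttDims, dif_pos (by omega)]
    congr 1; ext; simp; omega
  let B := Module.finBasisOfFinrankEq ℝ _ hdim
  refine ⟨fun a => B a, fun _ a => (B a).2, fun _ x hx => ?_, by omega, by omega⟩
  have hx' := Submodule.mem_map_of_mem (f := (unfoldingSpace X b.val).subtype)
    (B.mem_span ⟨x, hx⟩)
  rwa [Submodule.map_span, ← Set.range_comp] at hx'

/-- **Existence of the tensor-train decomposition.**  If `X ∈ ℝ^{n₁ × … × n_d}` (`d ≥ 2`) has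
TT-rank `(r₁, …, r_{d-1})`, i.e. `rank(X_{<k>}) = r k` for each `k`, then there exist TT cores
`G₁ ∈ ℝ^{n₁ × r₁}`, `G_k ∈ ℝ^{r_{k-1} × n_k × r_k}` (`2 ≤ k ≤ d-1`), `G_d ∈ ℝ^{r_{d-1} × n_d}`
(encoded uniformly via boundary bond dimensions equal to 1) such that
`X(i₁,…,i_d) = Σ_{α₁,…,α_{d-1}} G₁(i₁,α₁) G₂(α₁,i₂,α₂) ⋯ G_d(α_{d-1},i_d)`. -/
theorem tt_decomposition_exists (d : ℕ) (hd : 2 ≤ d) (n : Fin d → ℕ)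
    (r : Fin (d - 1) → ℕ) (X : (∀ k, Fin (n k)) → ℝ)
    (hrank : ∀ k : Fin (d - 1), (matricize n X k.val).rank = r k) :
    ∃ G : ∀ k : Fin d,
        Fin (ttDims d r k.castSucc) → Fin (n k) → Fin (ttDims d r k.succ) → ℝ,
      ∀ i : ∀ k, Fin (n k), X i = ttEval n (ttDims d r) G i := by
  rcases isEmpty_or_nonempty (∀ k, Fin (n k)) with hempty | hne
  · exact ⟨0, isEmptyElim⟩
  have : ∀ k, Nonempty (Fin (n k)) := Classical.nonempty_pi.1 hne
  choose V hmem hspan hfirst hlast using exists_spanning_family_unfoldingSpace (by omega : 0 < d) hrank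
  obtain ⟨G, hG⟩ := exists_ttEval_eq_of_update_mem_span V
    (fun k a y => hspan k.succ k.succ_pos (update_mem_unfoldingSpace (hmem k.castSucc k.isLt a) y))
    (congrFun (hlast (Fin.last d) rfl))
  refine ⟨G, fun i => ?_⟩
  have hdim_zero : ttDims d r 0 = 1 := dif_neg (by simp)
  rw [hG, hfirst 0 rfl, Finset.sum_const, Finset.card_univ, Fintype.card_fin, hdim_zero, one_smul]
end

section
/- (HOSVD quasioptimality) Let X ∈ ℝ^{n₁×…×n_d} and let r = (r₁,…,r_d). For each k, let P_k ∈ ℝ^{n_k×n_k} be an orthogonal projection matrix (P_k² = P_k = P_kᵀ) of rank at most r_k such that ‖X_(k) − P_k X_(k)‖_F = min{‖X_(k) − Z‖_F : rank(Z) ≤ r_k} (i.e., P_k projects onto a span of r_k dominant left singular vectors of X_(k)). Set Y = X ×₁ P₁ ×₂ … ×_d P_d. Then Y has Tucker rank componentwise at most r, and ‖X − Y‖_F² ≤ Σ_{k=1}^d ‖X_(k) − P_k X_(k)‖_F² ≤ d · min{‖X − W‖_F² : W has Tucker rank ⪯ r}. In particular ‖X − Y‖_F ≤ √d · min{‖X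 − W‖_F : W has Tucker rank ⪯ r}. -/
open Matrix

/-- The Frobenius norm of a `d`-dimensional real tensor. -/
noncomputable def tfrob {d : ℕ} {n : Fin d → ℕ} (X : (∀ k, Fin (n k)) → ℝ) : ℝ :=
  Real.sqrt (∑ i : ∀ k, Fin (n k), (X i) ^ 2)

/-- The mode-`k` unfolding of a `d`-dimensional tensor. -/
def unfold {d : ℕ} (n : Fin d → ℕ) (X : (∀ k, Fin (n k)) → ℝ) (k : Fin d) :
    Matrix (Fin (n k)) (∀ j : {j : Fin d // j ≠ k}, Fin (n j.1)) ℝ :=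
  Matrix.of fun i rest =>
    X (fun j => if h : j = k then Fin.cast (by rw [h]) i else rest ⟨j, h⟩)

/-!
Mode by mode: if `Z` is `X` projected in the modes of a set `s` and `k ∉ s`, then in the mode-`k`
unfolding `X - P_k Z` splits orthogonally into `X - P_k X` and `P_k (X - Z)`, and `P_k` does not
increase the Frobenius norm, so `‖X - P_k Z‖² ≤ ‖X_(k) - P_k X_(k)‖² + ‖X - Z‖²`. Induction over
the modes gives `‖X - Y‖² ≤ Σ_k ‖X_(k) - P_k X_(k)‖²`, and each summand is at most `‖X - W‖²` for
any `W` of Tucker rank `⪯ r`, since `W_(k)` has rank at most `r_k` and unfolding preserves the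
Frobenius norm. The rank bound holds because `Y_(k) = P_k · Z_(k)` for some `Z`.
-/

lemma le_mul_csInf {S : Set ℝ} (hS : S.Nonempty) {a c : ℝ} (hc : 0 ≤ c)
    (h : ∀ t ∈ S, a ≤ c * t) : a ≤ c * sInf S := by
  rw [← smul_eq_mul, ← Real.sInf_smul_of_nonneg hc]
  exact le_csInf hS.smul_set (by rintro _ ⟨t, ht, rfl⟩; exact h t ht)

namespace Equiv

variable {α : Type*} [DecidableEq α] {β : α → Type*} (k : α) (a : β k)
  (rest : ∀ j : {j // j ≠ k}, β j)

lemma piSplitAt_symm_apply_self : (piSplitAt k β).symm (a, rest) k = a := by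
  simp [piSplitAt]

lemma piSplitAt_symm_apply_ne (j : {j // j ≠ k}) : (piSplitAt k β).symm (a, rest) j = rest j := by
  simp [piSplitAt, j.2]

end Equiv

section Frobenius

variable {m p : Type*} [Fintype m] [Fintype p]

lemma mfrob_sq_eq_trace (A : Matrix m p ℝ) : mfrob A ^ 2 = (Aᵀ * A).trace := by
  rw [mfrob, Real.sq_sqrt (by positivity), Finset.sum_comm]
  simp [trace, mul_apply, sq]

variable {P : Matrix m m ℝ}

lemma mfrob_sq_eq_mul_add_sub (hP : P * P = P) (hPt : Pᵀ = P) (A : Matrix m p ℝ) :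
    mfrob A ^ 2 = mfrob (P * A) ^ 2 + mfrob (A - P * A) ^ 2 := by
  have horth : (P * A)ᵀ * (A - P * A) = 0 := by
    rw [transpose_mul, hPt, Matrix.mul_assoc, Matrix.mul_sub, ← Matrix.mul_assoc P P, hP,
      sub_self, Matrix.mul_zero]
  have horth' : (A - P * A)ᵀ * (P * A) = 0 := by
    rw [← transpose_transpose ((A - P * A)ᵀ * (P * A)), transpose_mul, transpose_transpose,
      horth, transpose_zero]
  simp only [mfrob_sq_eq_trace]
  conv_lhs => rw [← add_sub_cancel (P * A) A]
  rw [transpose_add, Matrix.add_mul, Matrix.mul_add, Matrix.mul_add, horth, horth']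
  simp only [add_zero, zero_add, trace_add]

lemma mfrob_sub_mul_sq_le (hP : P * P = P) (hPt : Pᵀ = P) (M N : Matrix m p ℝ) :
    mfrob (M - P * N) ^ 2 ≤ mfrob (M - P * M) ^ 2 + mfrob (M - N) ^ 2 := by
  have hproj : P * (M - P * N) = P * (M - N) := by
    rw [Matrix.mul_sub, Matrix.mul_sub, ← Matrix.mul_assoc, hP]
  have hres : M - P * N - P * (M - N) = M - P * M := by
    rw [Matrix.mul_sub]; abel
  calc mfrob (M - P * N) ^ 2 = mfrob (P * (M - N)) ^ 2 + mfrob (M - P * M) ^ 2 := by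
        rw [mfrob_sq_eq_mul_add_sub hP hPt, hproj, hres]
    _ ≤ mfrob (P * (M - N)) ^ 2 + mfrob (M - N - P * (M - N)) ^ 2 + mfrob (M - P * M) ^ 2 := by
        gcongr; exact le_add_of_nonneg_right (sq_nonneg _)
    _ = mfrob (M - P * M) ^ 2 + mfrob (M - N) ^ 2 := by
        rw [← mfrob_sq_eq_mul_add_sub hP hPt]; ring

end Frobenius

namespace Tensor

variable {d : ℕ} {n : Fin d → ℕ}

lemma unfold_apply (X : (∀ k, Fin (n k)) → ℝ) (k : Fin d) (a : Fin (n k))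
    (rest : ∀ j : {j : Fin d // j ≠ k}, Fin (n j.1)) :
    unfold n X k a rest = X ((Equiv.piSplitAt k fun j => Fin (n j)).symm (a, rest)) := by
  simp only [unfold, of_apply, Equiv.piSplitAt, Equiv.coe_fn_symm_mk]
  congr
  funext j
  split_ifs with h
  · subst h; rfl
  · rfl

lemma sum_eq_sum_sum_piSplitAt (k : Fin d) (f : (∀ k, Fin (n k)) → ℝ) :
    ∑ i, f i = ∑ a, ∑ rest, f ((Equiv.piSplitAt k fun j => Fin (n j)).symm (a, rest)) := by
  rw [← (Equiv.piSplitAt k fun j => Fin (n j)).symm.sum_comp, Fintype.sum_prod_type]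

lemma mfrob_unfold (X : (∀ k, Fin (n k)) → ℝ) (k : Fin d) :
    mfrob (unfold n X k) = tfrob X := by
  simp only [mfrob, tfrob, unfold_apply, sum_eq_sum_sum_piSplitAt k (fun i => X i ^ 2)]

/-- `multiModeMul A X = X ×₁ A 1 ×₂ ⋯ ×_d A d`. -/
def multiModeMul (A : ∀ k, Matrix (Fin (n k)) (Fin (n k)) ℝ) (X : (∀ k, Fin (n k)) → ℝ) :
    (∀ k, Fin (n k)) → ℝ :=
  fun i => ∑ α, X α * ∏ k, A k (i k) (α k)

def modeMul (k : Fin d) (B : Matrix (Fin (n k)) (Fin (n k)) ℝ) (X : (∀ k, Fin (n k)) → ℝ) :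
    (∀ k, Fin (n k)) → ℝ :=
  multiModeMul (Pi.mulSingle k B) X

lemma multiModeMul_one (X : (∀ k, Fin (n k)) → ℝ) : multiModeMul 1 X = X := by
  funext i
  simp [multiModeMul, one_apply, Finset.prod_boole, ← funext_iff]

lemma multiModeMul_multiModeMul (A B : ∀ k, Matrix (Fin (n k)) (Fin (n k)) ℝ)
    (X : (∀ k, Fin (n k)) → ℝ) :
    multiModeMul A (multiModeMul B X) = multiModeMul (A * B) X := by
  funext i
  simp only [multiModeMul, Pi.mul_apply, mul_apply, Fintype.prod_sum, Finset.sum_mul,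
    Finset.mul_sum, Finset.prod_mul_distrib]
  rw [Finset.sum_comm]
  refine Finset.sum_congr rfl fun α _ => Finset.sum_congr rfl fun β _ => ?_
  ring

lemma prod_mulSingle_piSplitAt_symm (k : Fin d) (B : Matrix (Fin (n k)) (Fin (n k)) ℝ)
    (a b : Fin (n k)) (rest ρ : ∀ j : {j : Fin d // j ≠ k}, Fin (n j.1)) :
    ∏ l, (Pi.mulSingle k B : ∀ k, Matrix (Fin (n k)) (Fin (n k)) ℝ) l
        ((Equiv.piSplitAt k fun j => Fin (n j)).symm (a, rest) l)
        ((Equiv.piSplitAt k fun j => Fin (n j)).symm (b, ρ) l) =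
      if rest = ρ then B a b else 0 := by
  have hone (l : {l // l ≠ k}) :
      (Pi.mulSingle k B : ∀ k, Matrix (Fin (n k)) (Fin (n k)) ℝ) l = 1 :=
    Pi.mulSingle_eq_of_ne (M := fun k => Matrix (Fin (n k)) (Fin (n k)) ℝ) l.2 B
  rw [Fintype.prod_eq_mul_prod_subtype_ne _ k]
  simp only [Equiv.piSplitAt_symm_apply_self, Equiv.piSplitAt_symm_apply_ne,
    Pi.mulSingle_eq_same, hone, one_apply, Finset.prod_boole, Finset.mem_univ, forall_const,
    ← funext_iff]
  split_ifs <;> simp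

lemma unfold_modeMul (k : Fin d) (B : Matrix (Fin (n k)) (Fin (n k)) ℝ)
    (X : (∀ k, Fin (n k)) → ℝ) : unfold n (modeMul k B X) k = B * unfold n X k := by
  ext a rest
  simp only [unfold_apply, modeMul, multiModeMul, sum_eq_sum_sum_piSplitAt k, mul_apply,
    prod_mulSingle_piSplitAt_symm, mul_ite, mul_zero, Finset.sum_ite_eq, Finset.mem_univ,
    if_true]
  exact Finset.sum_congr rfl fun b _ => mul_comm _ _

lemma unfold_sub (X Y : (∀ k, Fin (n k)) → ℝ) (k : Fin d) :
    unfold n (X - Y) k = unfold n X k - unfold n Y k := rfl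

lemma unfold_zero (k : Fin d) : unfold n (0 : (∀ k, Fin (n k)) → ℝ) k = 0 := rfl

lemma rank_unfold_multiModeMul_le (A : ∀ k, Matrix (Fin (n k)) (Fin (n k)) ℝ)
    (X : (∀ k, Fin (n k)) → ℝ) (k : Fin d) :
    (unfold n (multiModeMul A X) k).rank ≤ (A k).rank := by
  have hsplit : A = Pi.mulSingle k (A k) * Function.update A k 1 := by
    funext l
    by_cases h : l = k
    · subst h; simp
    · simp [h]
  have hY : multiModeMul A X = modeMul k (A k) (multiModeMul (Function.update A k 1) X) := by
    rw [modeMul, multiModeMul_multiModeMul, ← hsplit]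
  rw [hY, unfold_modeMul]
  exact rank_mul_le_left _ _

lemma piecewise_insert_eq_mulSingle_mul (P : ∀ k, Matrix (Fin (n k)) (Fin (n k)) ℝ)
    {s : Finset (Fin d)} {k : Fin d} (hk : k ∉ s) :
    (insert k s).piecewise P 1 = Pi.mulSingle k (P k) * s.piecewise P 1 := by
  funext l
  by_cases h : l = k
  · subst h; simp [hk]
  · simp [h]

lemma tfrob_sub_multiModeMul_piecewise_sq_le {P : ∀ k, Matrix (Fin (n k)) (Fin (n k)) ℝ}
    (hidem : ∀ k, P k * P k = P k) (hsymm : ∀ k, (P k)ᵀ = P k)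
    (X : (∀ k, Fin (n k)) → ℝ) (s : Finset (Fin d)) :
    tfrob (X - multiModeMul (s.piecewise P 1) X) ^ 2 ≤
      ∑ k ∈ s, mfrob (unfold n X k - P k * unfold n X k) ^ 2 := by
  induction s using Finset.induction_on with
  | empty => simp [multiModeMul_one, tfrob]
  | @insert k s hk ih =>
    set Z := multiModeMul (s.piecewise P 1) X
    have hstep : multiModeMul ((insert k s).piecewise P 1) X = modeMul k (P k) Z := by
      rw [piecewise_insert_eq_mulSingle_mul P hk, ← multiModeMul_multiModeMul, modeMul]
    calc tfrob (X - multiModeMul ((insert k s).piecewise P 1) X) ^ 2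
        = mfrob (unfold n X k - P k * unfold n Z k) ^ 2 := by
          rw [hstep, ← mfrob_unfold _ k, unfold_sub, unfold_modeMul]
      _ ≤ mfrob (unfold n X k - P k * unfold n X k) ^ 2 +
            mfrob (unfold n X k - unfold n Z k) ^ 2 :=
          mfrob_sub_mul_sq_le (hidem k) (hsymm k) _ _
      _ = mfrob (unfold n X k - P k * unfold n X k) ^ 2 + tfrob (X - Z) ^ 2 := by
          rw [← unfold_sub, mfrob_unfold]
      _ ≤ ∑ k ∈ insert k s, mfrob (unfold n X k - P k * unfold n X k) ^ 2 := by
          rw [Finset.sum_insert hk]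
          gcongr

end Tensor

open Tensor in
/-- **Quasioptimality of HOSVD.**  Let `P k` be orthogonal projection matrices
(`P² = P = Pᵀ`) of rank at most `r k`, each projecting onto a span of `r k` dominant left
singular vectors of `X_(k)` (i.e. `P_k X_(k)` is a best rank-`r k` approximation of `X_(k)`),
and let `Y = X ×₁ P₁ ×₂ … ×_d P_d`.  Then `Y` has Tucker rank componentwise at most `r`,
`‖X - Y‖_F² ≤ Σ_k ‖X_(k) - P_k X_(k)‖_F² ≤ d ⋅ min{‖X - W‖_F² : Tucker rank of W ⪯ r}`,
and in particular `‖X - Y‖_F ≤ √d ⋅ min{‖X - W‖_F : Tucker rank of W ⪯ r}`. -/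
theorem hosvd_quasioptimal (d : ℕ) (n r : Fin d → ℕ)
    (X : (∀ k, Fin (n k)) → ℝ)
    (P : ∀ k, Matrix (Fin (n k)) (Fin (n k)) ℝ)
    (hidem : ∀ k, P k * P k = P k)
    (hsymm : ∀ k, (P k)ᵀ = P k)
    (hPrank : ∀ k, (P k).rank ≤ r k)
    (hbest : ∀ k, ∀ Z : Matrix (Fin (n k)) (∀ j : {j : Fin d // j ≠ k}, Fin (n j.1)) ℝ,
      Z.rank ≤ r k →
        mfrob (unfold n X k - P k * unfold n X k) ≤ mfrob (unfold n X k - Z))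
    (Y : (∀ k, Fin (n k)) → ℝ)
    (hY : ∀ i : ∀ k, Fin (n k),
      Y i = ∑ α : ∀ k, Fin (n k), X α * ∏ k, P k (i k) (α k)) :
    (∀ k, (unfold n Y k).rank ≤ r k) ∧
    tfrob (X - Y) ^ 2 ≤ ∑ k, mfrob (unfold n X k - P k * unfold n X k) ^ 2 ∧
    (∑ k, mfrob (unfold n X k - P k * unfold n X k) ^ 2) ≤
      (d : ℝ) * sInf {t : ℝ | ∃ W : (∀ k, Fin (n k)) → ℝ,
        (∀ k, (unfold n W k).rank ≤ r k) ∧ t = tfrob (X - W) ^ 2} ∧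
    tfrob (X - Y) ≤ Real.sqrt d * sInf {t : ℝ | ∃ W : (∀ k, Fin (n k)) → ℝ,
        (∀ k, (unfold n W k).rank ≤ r k) ∧ t = tfrob (X - W)} := by
  have hYP : Y = multiModeMul P X := funext hY
  have herr : tfrob (X - Y) ^ 2 ≤ ∑ k, mfrob (unfold n X k - P k * unfold n X k) ^ 2 := by
    simpa [hYP] using tfrob_sub_multiModeMul_piecewise_sq_le hidem hsymm X Finset.univ
  have hquasi (W : (∀ k, Fin (n k)) → ℝ) (hW : ∀ k, (unfold n W k).rank ≤ r k) :
      ∑ k, mfrob (unfold n X k - P k * unfold n X k) ^ 2 ≤ d * tfrob (X - W) ^ 2 := by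
    calc ∑ k, mfrob (unfold n X k - P k * unfold n X k) ^ 2
        ≤ ∑ _k : Fin d, tfrob (X - W) ^ 2 := Finset.sum_le_sum fun k _ =>
          pow_le_pow_left₀ (Real.sqrt_nonneg _)
            ((hbest k _ (hW k)).trans_eq (by rw [← unfold_sub, mfrob_unfold])) 2
      _ = d * tfrob (X - W) ^ 2 := by simp
  have hzero : ∀ k, (unfold n (0 : (∀ k, Fin (n k)) → ℝ) k).rank ≤ r k := fun k => by
    simp [unfold_zero]
  refine ⟨fun k => hYP ▸ (rank_unfold_multiModeMul_le P X k).trans (hPrank k), herr, ?_, ?_⟩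
  · refine le_mul_csInf ?_ d.cast_nonneg ?_
    · exact ⟨_, 0, hzero, rfl⟩
    · rintro _ ⟨W, hW, rfl⟩
      exact hquasi W hW
  · refine le_mul_csInf ?_ (Real.sqrt_nonneg _) ?_
    · exact ⟨_, 0, hzero, rfl⟩
    · rintro _ ⟨W, hW, rfl⟩
      refine le_of_pow_le_pow_left₀ two_ne_zero
        (mul_nonneg (Real.sqrt_nonneg _) (Real.sqrt_nonneg _)) ?_
      rw [mul_pow, Real.sq_sqrt d.cast_nonneg]
      exact herr.trans (hquasi W hW)
end

section
/- (von Neumann alternating projections) Let H be a real Hilbert space and let M, N be closed linear subspaces of H, with orthogonal projections P_M, P_N, and P_{M∩N} onto M, N, and M∩N respectively. Then for every x ∈ H, the iterates (P_N P_M)ⁿ x converge in norm to P_{M∩N} x as n → ∞. -/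
/-! Write `T = P_N P_M`. For `u, v ∈ N` one has `⟪T u, v⟫ = ⟪P_M u, v⟫ = ⟪u, T v⟫` and
`‖T u‖² ≤ ⟪T u, u⟫`, so along the iterates `yₖ = Tᵏ⁺¹ x ∈ N` the Gram entries `⟪yᵢ, yⱼ⟫ = a (i + j)`
depend only on `i + j`, through a nonincreasing sequence `a ≥ 0`. Hence
`‖yₘ - yₙ‖² = a (2m) - 2 a (m + n) + a (2n) → 0` and the iterates converge in the complete space `N`.
The limit `z` is a fixed point of `T`, which forces `z ∈ M ⊓ N`, and `⟪Tⁿ x, w⟫ = ⟪x, w⟫` for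
`w ∈ M ⊓ N` gives `x - z ⊥ M ⊓ N`. -/

open Filter Topology RealInnerProductSpace

theorem tendsto_sub_two_mul_add_of_tendsto {a : ℕ → ℝ} {L : ℝ} (h : Tendsto a atTop (𝓝 L)) :
    Tendsto (fun p : ℕ × ℕ => a (p.1 + p.1) - 2 * a (p.1 + p.2) + a (p.2 + p.2)) atTop (𝓝 0) := by
  have hfst : Tendsto (Prod.fst : ℕ × ℕ → ℕ) atTop atTop :=
    monotone_fst.tendsto_atTop_atTop fun b => ⟨(b, 0), le_rfl⟩
  have hsnd : Tendsto (Prod.snd : ℕ × ℕ → ℕ) atTop atTop :=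
    monotone_snd.tendsto_atTop_atTop fun b => ⟨(0, b), le_rfl⟩
  have hquad := ((h.comp (hfst.atTop_add_atTop hfst)).sub
    ((h.comp (hfst.atTop_add_atTop hsnd)).const_mul 2)).add (h.comp (hsnd.atTop_add_atTop hsnd))
  rwa [show L - 2 * L + L = 0 by ring] at hquad

section GramSequence

variable {E : Type*} [NormedAddCommGroup E] [InnerProductSpace ℝ E]

theorem inner_le_norm_sq_of_norm_sq_le_inner {u v : E} (h : ‖u‖ ^ 2 ≤ ⟪u, v⟫) :
    ⟪u, v⟫ ≤ ‖v‖ ^ 2 := by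
  linarith [norm_sub_sq_real u v, sq_nonneg ‖u - v‖]

variable {y : ℕ → E} (hsymm : ∀ i j, ⟪y (i + 1), y j⟫ = ⟪y i, y (j + 1)⟫)
include hsymm

theorem inner_eq_inner_add_zero_of_inner_succ_symm (i j : ℕ) :
    ⟪y i, y j⟫ = ⟪y (i + j), y 0⟫ := by
  induction j generalizing i with
  | zero => rfl
  | succ j ih => rw [← hsymm, ih, add_right_comm, add_assoc]

variable (hle : ∀ k, ‖y (k + 1)‖ ^ 2 ≤ ⟪y (k + 1), y k⟫)
include hle

theorem antitone_inner_zero_of_inner_succ_symm : Antitone fun k => ⟪y k, y 0⟫ := by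
  have hgram := inner_eq_inner_add_zero_of_inner_succ_symm hsymm
  refine antitone_nat_of_succ_le fun k => ?_
  obtain ⟨j, rfl | rfl⟩ := Nat.even_or_odd' k
  · rw [show 2 * j + 1 = j + 1 + j by ring, show 2 * j = j + j by ring, ← hgram, ← hgram,
      real_inner_self_eq_norm_sq]
    exact inner_le_norm_sq_of_norm_sq_le_inner (hle j)
  · rw [show 2 * j + 1 + 1 = j + 1 + (j + 1) by ring, show 2 * j + 1 = j + 1 + j by ring,
      ← hgram, ← hgram, real_inner_self_eq_norm_sq]
    exact hle j

theorem cauchySeq_of_inner_succ_symm : CauchySeq y := by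
  set a : ℕ → ℝ := fun k => ⟪y k, y 0⟫
  have hgram := inner_eq_inner_add_zero_of_inner_succ_symm hsymm
  have ha : Antitone a := antitone_inner_zero_of_inner_succ_symm hsymm hle
  have hbdd : BddBelow (Set.range a) := ⟨0, by
    rintro _ ⟨k, rfl⟩
    calc (0 : ℝ) ≤ ‖y k‖ ^ 2 := by positivity
      _ = a (k + k) := by rw [← real_inner_self_eq_norm_sq, hgram]
      _ ≤ a k := ha (Nat.le_add_right k k)⟩
  have hdist : ∀ m n, dist (y m) (y n) = √(a (m + m) - 2 * a (m + n) + a (n + n)) := fun m n => by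
    rw [dist_eq_norm, ← Real.sqrt_sq (norm_nonneg _), norm_sub_sq_real,
      ← real_inner_self_eq_norm_sq, ← real_inner_self_eq_norm_sq, hgram m m, hgram m n, hgram n n]
  rw [cauchySeq_iff_tendsto_dist_atTop_0]
  simpa only [hdist, Real.sqrt_zero, Function.comp_def] using (Real.continuous_sqrt.tendsto 0).comp
    (tendsto_sub_two_mul_add_of_tendsto (tendsto_atTop_ciInf ha hbdd))

end GramSequence

namespace Submodule

variable {H : Type*} [NormedAddCommGroup H] [InnerProductSpace ℝ H]
  {M N : Submodule ℝ H} [M.HasOrthogonalProjection] [N.HasOrthogonalProjection]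

theorem inner_starProjection_comp_apply_left_eq_right {u v : H} (hu : u ∈ N) (hv : v ∈ N) :
    ⟪(N.starProjection ∘L M.starProjection) u, v⟫ = ⟪u, (N.starProjection ∘L M.starProjection) v⟫ := by
  simp only [ContinuousLinearMap.comp_apply]
  rw [inner_starProjection_left_eq_right, starProjection_eq_self_iff.mpr hv,
    inner_starProjection_left_eq_right, ← N.inner_starProjection_left_eq_right,
    starProjection_eq_self_iff.mpr hu]

theorem norm_sq_starProjection_comp_apply_le_inner {u : H} (hu : u ∈ N) :
    ‖(N.starProjection ∘L M.starProjection) u‖ ^ 2 ≤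
      ⟪(N.starProjection ∘L M.starProjection) u, u⟫ := by
  have hinner : ⟪(N.starProjection ∘L M.starProjection) u, u⟫ = ‖M.starProjection u‖ ^ 2 := by
    rw [ContinuousLinearMap.comp_apply, inner_starProjection_left_eq_right,
      starProjection_eq_self_iff.mpr hu, ← real_inner_self_eq_norm_sq,
      ← inner_starProjection_left_eq_right,
      starProjection_eq_self_iff.mpr (M.starProjection_apply_mem u)]
  rw [hinner]
  gcongr
  exact N.norm_starProjection_apply_le _

theorem mem_inf_of_starProjection_comp_apply_eq_self {z : H}
    (hz : (N.starProjection ∘L M.starProjection) z = z) : z ∈ M ⊓ N := by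
  have hzM : z ∈ M := by
    refine (M.mem_iff_norm_starProjection z).mpr (le_antisymm (M.norm_starProjection_apply_le z) ?_)
    calc ‖z‖ = ‖N.starProjection (M.starProjection z)‖ := (congrArg norm hz).symm
      _ ≤ ‖M.starProjection z‖ := N.norm_starProjection_apply_le _
  rw [ContinuousLinearMap.comp_apply, starProjection_eq_self_iff.mpr hzM,
    starProjection_eq_self_iff] at hz
  exact mem_inf.mpr ⟨hzM, hz⟩

theorem inner_iterate_starProjection_comp_apply_of_mem_inf {w : H} (hw : w ∈ M ⊓ N)
    (x : H) (n : ℕ) : ⟪(N.starProjection ∘L M.starProjection)^[n] x, w⟫ = ⟪x, w⟫ := by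
  induction n with
  | zero => rfl
  | succ n ih =>
    rw [Function.iterate_succ_apply', ContinuousLinearMap.comp_apply,
      inner_starProjection_left_eq_right, starProjection_eq_self_iff.mpr (mem_inf.mp hw).2,
      inner_starProjection_left_eq_right, starProjection_eq_self_iff.mpr (mem_inf.mp hw).1, ih]

variable (M N) in
theorem iterate_succ_starProjection_comp_apply_mem (x : H) (n : ℕ) :
    (N.starProjection ∘L M.starProjection)^[n + 1] x ∈ N := by
  rw [Function.iterate_succ_apply']
  exact N.starProjection_apply_mem _

variable (M N) in
theorem cauchySeq_iterate_succ_starProjection_comp (x : H) :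
    CauchySeq fun n => (N.starProjection ∘L M.starProjection)^[n + 1] x := by
  have hmem := iterate_succ_starProjection_comp_apply_mem M N x
  refine cauchySeq_of_inner_succ_symm (fun i j => ?_) (fun k => ?_)
  · rw [Function.iterate_succ_apply' _ (i + 1),
      inner_starProjection_comp_apply_left_eq_right (hmem i) (hmem j),
      Function.iterate_succ_apply' _ (j + 1)]
  · rw [Function.iterate_succ_apply' _ (k + 1)]
    exact norm_sq_starProjection_comp_apply_le_inner (hmem k)

end Submodule

theorem alternating_projections_subspaces_general
    {H : Type*} [NormedAddCommGroup H] [InnerProductSpace ℝ H]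
    (M N : Submodule ℝ H) [CompleteSpace M] [CompleteSpace N]
    [CompleteSpace (M ⊓ N : Submodule ℝ H)] (x : H) :
    Filter.Tendsto
      (fun n : ℕ =>
        (fun y : H => (Submodule.orthogonalProjectionOnto N (Submodule.orthogonalProjectionOnto M y : H) : H))^[n] x)
      Filter.atTop (nhds ((Submodule.orthogonalProjectionOnto (M ⊓ N : Submodule ℝ H) x : H))) := by
  set T := N.starProjection ∘L M.starProjection
  change Tendsto (fun n => T^[n] x) atTop (𝓝 ((M ⊓ N).starProjection x))
  obtain ⟨z, -, hz⟩ := cauchySeq_tendsto_of_isComplete (completeSpace_coe_iff_isComplete.mp ‹_›)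
    (Submodule.iterate_succ_starProjection_comp_apply_mem M N x)
    (Submodule.cauchySeq_iterate_succ_starProjection_comp M N x)
  have hz' : Tendsto (fun n => T^[n] x) atTop (𝓝 z) := (tendsto_add_atTop_iff_nat 1).mp hz
  have hTz : T z = z := by
    have h := (T.continuous.tendsto z).comp hz'
    simp only [Function.comp_def, ← Function.iterate_succ_apply' T] at h
    exact tendsto_nhds_unique h hz
  have hperp : ∀ w ∈ M ⊓ N, ⟪x - z, w⟫ = 0 := fun w hw => by
    have h : Tendsto (fun n => ⟪T^[n] x, w⟫) atTop (𝓝 ⟪z, w⟫) := hz'.inner tendsto_const_nhds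
    simp only [T, Submodule.inner_iterate_starProjection_comp_apply_of_mem_inf hw] at h
    rw [inner_sub_left, tendsto_nhds_unique tendsto_const_nhds h, sub_self]
  rwa [Submodule.eq_starProjection_of_mem_of_inner_eq_zero
    (Submodule.mem_inf_of_starProjection_comp_apply_eq_self hTz) hperp]

/-- **von Neumann's alternating projection theorem.**  Let `M` and `N` be closed linear
subspaces of a real Hilbert space `H`.  Then for every `x ∈ H` the alternating-projection
iterates `(P_N P_M)ⁿ x` converge in norm to `P_{M ∩ N} x`. -/
theorem alternating_projections_subspaces
    {H : Type*} [NormedAddCommGroup H] [InnerProductSpace ℝ H] [CompleteSpace H]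
    (M N : Submodule ℝ H) [CompleteSpace M] [CompleteSpace N]
    [CompleteSpace (M ⊓ N : Submodule ℝ H)] (x : H) :
    Filter.Tendsto
      (fun n : ℕ =>
        (fun y : H => (Submodule.orthogonalProjectionOnto N (Submodule.orthogonalProjectionOnto M y : H) : H))^[n] x)
      Filter.atTop (nhds ((Submodule.orthogonalProjectionOnto (M ⊓ N : Submodule ℝ H) x : H))) :=
  alternating_projections_subspaces_general M N x
end

section
/- (Linear rate via the Friedrichs angle) Let H be a real Hilbert space and M, N closed linear subspaces. Define c = sup{⟨u, v⟩ : u ∈ M ∩ (M∩N)^⊥, v ∈ N ∩ (M∩N)^⊥, ‖u‖ ≤ 1, ‖v‖ ≤ 1} (the cosine of the Friedrichs angle between M and N). Then for every x ∈ H and every n ≥ 1, ‖(P_N P_M)ⁿ x − P_{M∩N} x‖ ≤ c^{2n−1} ‖x‖. -/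
/-!
Split `x = p + z` with `p = P_{M∩N} x`, a fixed point of `P_N P_M`, and `z ⊥ M ∩ N`. Both
projections preserve `(M∩N)ᗮ`, and for `u ∈ M ∩ (M∩N)ᗮ` the vector `v = P_N u` lies in
`N ∩ (M∩N)ᗮ` with `‖v‖² = ⟪u, v⟫ ≤ c ‖u‖ ‖v‖`; so `P_N` contracts by `c` there, and symmetrically
`P_M` on `N ∩ (M∩N)ᗮ`. The first step of `P_N P_M` applied to `z` gains a factor `c` (only `P_N`
contracts), every later step `c²`.
-/

open scoped RealInnerProductSpace

theorem norm_iterate_le_of_mapsTo {E : Type*} [Norm E] {f : E → E} {S : Set E} {k : ℝ}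
    (hk : 0 ≤ k) (hS : Set.MapsTo f S S) (hf : ∀ w ∈ S, ‖f w‖ ≤ k * ‖w‖) (n : ℕ) {w : E}
    (hw : w ∈ S) : ‖f^[n] w‖ ≤ k ^ n * ‖w‖ := by
  induction n with
  | zero => simp
  | succ n ih =>
    calc ‖f^[n + 1] w‖ = ‖f (f^[n] w)‖ := by rw [Function.iterate_succ_apply']
      _ ≤ k * (k ^ n * ‖w‖) := by
        grw [hf _ (hS.iterate n hw), ih]
      _ = k ^ (n + 1) * ‖w‖ := by ring

namespace Submodule

variable {H : Type*} [NormedAddCommGroup H] [InnerProductSpace ℝ H]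

noncomputable def friedrichsCos (M N : Submodule ℝ H) : ℝ :=
  sSup {c : ℝ | ∃ u ∈ M ⊓ (M ⊓ N)ᗮ, ∃ v ∈ N ⊓ (M ⊓ N)ᗮ, ‖u‖ ≤ 1 ∧ ‖v‖ ≤ 1 ∧ c = ⟪u, v⟫}

section friedrichsCos

variable (M N : Submodule ℝ H)

theorem bddAbove_friedrichsCos_set :
    BddAbove {c : ℝ | ∃ u ∈ M ⊓ (M ⊓ N)ᗮ, ∃ v ∈ N ⊓ (M ⊓ N)ᗮ,
      ‖u‖ ≤ 1 ∧ ‖v‖ ≤ 1 ∧ c = ⟪u, v⟫} := by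
  refine ⟨1, ?_⟩
  rintro _ ⟨u, -, v, -, hu, hv, rfl⟩
  calc ⟪u, v⟫ ≤ ‖u‖ * ‖v‖ := real_inner_le_norm u v
    _ ≤ 1 := mul_le_one₀ hu (norm_nonneg v) hv

theorem friedrichsCos_nonneg : 0 ≤ friedrichsCos M N :=
  le_csSup (bddAbove_friedrichsCos_set M N) ⟨0, zero_mem _, 0, zero_mem _, by simp⟩

theorem friedrichsCos_comm : friedrichsCos M N = friedrichsCos N M := by
  unfold friedrichsCos
  rw [inf_comm M N]
  congr 1
  ext c
  constructor <;> rintro ⟨u, hu, v, hv, hu1, hv1, rfl⟩ <;>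
    exact ⟨v, hv, u, hu, hv1, hu1, real_inner_comm _ _⟩

variable {M N} in
theorem real_inner_le_friedrichsCos_mul {u v : H} (hu : u ∈ M ⊓ (M ⊓ N)ᗮ)
    (hv : v ∈ N ⊓ (M ⊓ N)ᗮ) : ⟪u, v⟫ ≤ friedrichsCos M N * (‖u‖ * ‖v‖) := by
  rcases eq_or_ne u 0 with rfl | hu0
  · simp
  rcases eq_or_ne v 0 with rfl | hv0
  · simp
  have hu' : ‖u‖⁻¹ • u ∈ M ⊓ (M ⊓ N)ᗮ := smul_mem _ _ hu
  have hv' : ‖v‖⁻¹ • v ∈ N ⊓ (M ⊓ N)ᗮ := smul_mem _ _ hv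
  have hle : ⟪‖u‖⁻¹ • u, ‖v‖⁻¹ • v⟫ ≤ friedrichsCos M N :=
    le_csSup (bddAbove_friedrichsCos_set M N)
      ⟨_, hu', _, hv', by simp [norm_smul, hu0], by simp [norm_smul, hv0], rfl⟩
  rw [real_inner_smul_left, real_inner_smul_right, ← mul_assoc, ← mul_inv,
    inv_mul_le_iff₀ (by positivity)] at hle
  exact hle.trans_eq (mul_comm _ _)

end friedrichsCos

theorem starProjection_mem_orthogonal_of_le {K L : Submodule ℝ H} [K.HasOrthogonalProjection]
    (h : L ≤ K) {w : H} (hw : w ∈ Lᗮ) : K.starProjection w ∈ Lᗮ := by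
  intro s hs
  rw [← inner_starProjection_left_eq_right, starProjection_eq_self_iff.mpr (h hs)]
  exact hw s hs

theorem norm_starProjection_le_friedrichsCos_mul {K L : Submodule ℝ H} [L.HasOrthogonalProjection]
    {u : H} (hu : u ∈ K ⊓ (K ⊓ L)ᗮ) :
    ‖L.starProjection u‖ ≤ friedrichsCos K L * ‖u‖ := by
  set v := L.starProjection u
  have hvL : v ∈ L := L.starProjection_apply_mem u
  have hv : v ∈ L ⊓ (K ⊓ L)ᗮ := ⟨hvL, starProjection_mem_orthogonal_of_le inf_le_right hu.2⟩
  have hinner : ⟪u, v⟫ = ‖v‖ ^ 2 := by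
    rw [← real_inner_self_eq_norm_sq, ← sub_eq_zero, ← inner_sub_left]
    exact starProjection_inner_eq_zero u v hvL
  have hle := real_inner_le_friedrichsCos_mul hu hv
  rw [hinner] at hle
  nlinarith [mul_nonneg (friedrichsCos_nonneg K L) (norm_nonneg u)]

section alternating

variable {M N : Submodule ℝ H} [M.HasOrthogonalProjection] [N.HasOrthogonalProjection]

theorem starProjection_comp_mem_inf_orthogonal {z : H} (hz : z ∈ (M ⊓ N)ᗮ) :
    (N.starProjection ∘L M.starProjection) z ∈ N ⊓ (M ⊓ N)ᗮ :=
  ⟨N.starProjection_apply_mem _, starProjection_mem_orthogonal_of_le inf_le_right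
    (starProjection_mem_orthogonal_of_le inf_le_left hz)⟩

theorem norm_starProjection_comp_le_mul {z : H} (hz : z ∈ (M ⊓ N)ᗮ) :
    ‖(N.starProjection ∘L M.starProjection) z‖ ≤ friedrichsCos M N * ‖z‖ := by
  have hMz : M.starProjection z ∈ M ⊓ (M ⊓ N)ᗮ :=
    ⟨M.starProjection_apply_mem z, starProjection_mem_orthogonal_of_le inf_le_left hz⟩
  calc ‖N.starProjection (M.starProjection z)‖ ≤ friedrichsCos M N * ‖M.starProjection z‖ :=
        norm_starProjection_le_friedrichsCos_mul hMz
    _ ≤ friedrichsCos M N * ‖z‖ := by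
        gcongr
        · exact friedrichsCos_nonneg M N
        · exact M.norm_starProjection_apply_le z

theorem norm_starProjection_comp_le_sq_mul {w : H} (hw : w ∈ N ⊓ (M ⊓ N)ᗮ) :
    ‖(N.starProjection ∘L M.starProjection) w‖ ≤ friedrichsCos M N ^ 2 * ‖w‖ := by
  have hw' : w ∈ N ⊓ (N ⊓ M)ᗮ := inf_comm M N ▸ hw
  have hMw : M.starProjection w ∈ M ⊓ (M ⊓ N)ᗮ :=
    ⟨M.starProjection_apply_mem w, starProjection_mem_orthogonal_of_le inf_le_left hw.2⟩
  calc ‖N.starProjection (M.starProjection w)‖ ≤ friedrichsCos M N * ‖M.starProjection w‖ :=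
        norm_starProjection_le_friedrichsCos_mul hMw
    _ ≤ friedrichsCos M N * (friedrichsCos M N * ‖w‖) := by
        gcongr
        · exact friedrichsCos_nonneg M N
        · exact friedrichsCos_comm M N ▸ norm_starProjection_le_friedrichsCos_mul hw'
    _ = friedrichsCos M N ^ 2 * ‖w‖ := by ring

theorem norm_iterate_starProjection_comp_le {z : H} (hz : z ∈ (M ⊓ N)ᗮ) (n : ℕ) :
    ‖(N.starProjection ∘L M.starProjection)^[n] z‖ ≤ friedrichsCos M N ^ (2 * n - 1) * ‖z‖ := by
  set T := N.starProjection ∘L M.starProjection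
  set c := friedrichsCos M N
  cases n with
  | zero => simp -- `2 * 0 - 1 = 0` in `ℕ`
  | succ n =>
    have hS : Set.MapsTo T (N ⊓ (M ⊓ N)ᗮ) (N ⊓ (M ⊓ N)ᗮ) := fun w hw =>
      starProjection_comp_mem_inf_orthogonal hw.2
    calc ‖T^[n] (T z)‖ ≤ (c ^ 2) ^ n * ‖T z‖ :=
          norm_iterate_le_of_mapsTo (sq_nonneg c) hS
            (fun w hw => norm_starProjection_comp_le_sq_mul hw) n
            (starProjection_comp_mem_inf_orthogonal hz)
      _ ≤ (c ^ 2) ^ n * (c * ‖z‖) := by grw [norm_starProjection_comp_le_mul hz]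
      _ = c ^ (2 * (n + 1) - 1) * ‖z‖ := by
        rw [show 2 * (n + 1) - 1 = 2 * n + 1 by omega]
        ring

end alternating

end Submodule

open Submodule in
theorem alternating_projections_rate_friedrichs_general
    {H : Type*} [NormedAddCommGroup H] [InnerProductSpace ℝ H]
    (M N : Submodule ℝ H) [CompleteSpace M] [CompleteSpace N]
    [CompleteSpace (M ⊓ N : Submodule ℝ H)] (x : H) (n : ℕ) :
    ‖(fun y : H => (N.orthogonalProjectionOnto (M.orthogonalProjectionOnto y : H) : H))^[n] x
        - ((M ⊓ N : Submodule ℝ H).orthogonalProjectionOnto x : H)‖ ≤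
      (sSup {c : ℝ | ∃ u ∈ M ⊓ (M ⊓ N)ᗮ, ∃ v ∈ N ⊓ (M ⊓ N)ᗮ,
        ‖u‖ ≤ 1 ∧ ‖v‖ ≤ 1 ∧ c = ⟪u, v⟫}) ^ (2 * n - 1) * ‖x‖ := by
  set T := N.starProjection ∘L M.starProjection
  set p := (M ⊓ N).starProjection x
  change ‖T^[n] x - p‖ ≤ friedrichsCos M N ^ (2 * n - 1) * ‖x‖
  have hp : p ∈ M ⊓ N := (M ⊓ N).starProjection_apply_mem x
  have hTp : Function.IsFixedPt T p := by
    change N.starProjection (M.starProjection p) = p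
    rw [starProjection_eq_self_iff.mpr hp.1, starProjection_eq_self_iff.mpr hp.2]
  calc ‖T^[n] x - p‖ = ‖T^[n] (x - p)‖ := by rw [iterate_map_sub, (hTp.iterate n).eq]
    _ ≤ friedrichsCos M N ^ (2 * n - 1) * ‖x - p‖ :=
      norm_iterate_starProjection_comp_le (sub_starProjection_mem_orthogonal x) n
    _ ≤ friedrichsCos M N ^ (2 * n - 1) * ‖x‖ := by
      have := friedrichsCos_nonneg M N
      grw [← starProjection_orthogonal_val, norm_starProjection_apply_le]

/-- **Linear convergence rate of alternating projections via the Friedrichs angle.**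
Let `M`, `N` be closed linear subspaces of a real Hilbert space `H` and let
`c = sup{⟨u, v⟩ : u ∈ M ∩ (M∩N)^⊥, v ∈ N ∩ (M∩N)^⊥, ‖u‖ ≤ 1, ‖v‖ ≤ 1}` be the cosine of the
Friedrichs angle between `M` and `N`.  Then for every `x ∈ H` and every `n ≥ 1`,
`‖(P_N P_M)ⁿ x − P_{M∩N} x‖ ≤ c^(2n−1) ‖x‖`. -/
theorem alternating_projections_rate_friedrichs
    {H : Type*} [NormedAddCommGroup H] [InnerProductSpace ℝ H] [CompleteSpace H]
    (M N : Submodule ℝ H) [CompleteSpace M] [CompleteSpace N]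
    [CompleteSpace (M ⊓ N : Submodule ℝ H)] (x : H) (n : ℕ) (hn : 1 ≤ n) :
    ‖(fun y : H => (N.orthogonalProjectionOnto (M.orthogonalProjectionOnto y : H) : H))^[n] x
        - ((M ⊓ N : Submodule ℝ H).orthogonalProjectionOnto x : H)‖ ≤
      (sSup {c : ℝ | ∃ u ∈ M ⊓ (M ⊓ N)ᗮ, ∃ v ∈ N ⊓ (M ⊓ N)ᗮ,
        ‖u‖ ≤ 1 ∧ ‖v‖ ≤ 1 ∧ c = ⟪u, v⟫}) ^ (2 * n - 1) * ‖x‖ :=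
  alternating_projections_rate_friedrichs_general M N x n
end

section
/- (Weak convergence of alternating projections for convex sets) Let H be a real Hilbert space and let C, D ⊆ H be closed convex sets with C ∩ D ≠ ∅. Let P_C and P_D denote the metric projections onto C and D. Then for any starting point x₀ ∈ H, the sequence defined by x_{n+1} = P_D(P_C(x_n)) converges weakly to a point of C ∩ D. -/
/-!
For `z` in a convex set `S`, the nearest point `q` of `S` to `a` satisfies
`‖q - z‖² + ‖q - a‖² ≤ ‖a - z‖²`. Applied to both half-steps this makes the iterates Fejér
monotone with respect to `C ∩ D`, with square-summable displacements `P_C xₙ - xₙ` and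
`xₙ₊₁ - P_C xₙ`. Hence every weak cluster point of `(xₙ)` is also one of `(P_C xₙ) ⊆ C` and of
`(xₙ₊₁) ⊆ D`, so it lies in `C ∩ D`, closed convex sets being weakly closed. Finally (Opial) the
distances from `xₙ` to points of `C ∩ D` converge, which fixes the limit of `⟪xₙ, p - q⟫` for
two cluster points `p`, `q`, and comparing the two ways of computing it gives `‖p - q‖² = 0`.
-/

open scoped RealInnerProductSpace

open Filter Topology

section

variable {H : Type*} [NormedAddCommGroup H] [InnerProductSpace ℝ H] {ι : Type*}

theorem tendsto_zero_of_succ_add_le {d g : ℕ → ℝ} (hd : ∀ n, 0 ≤ d n) (hg : ∀ n, 0 ≤ g n)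
    (h : ∀ n, d (n + 1) + g n ≤ d n) : Tendsto g atTop (𝓝 0) := by
  have hanti : Antitone d := antitone_nat_of_succ_le fun n => by linarith [h n, hg n]
  have hd_lim := tendsto_atTop_ciInf hanti ⟨0, by rintro _ ⟨n, rfl⟩; exact hd n⟩
  have hdiff : Tendsto (fun n => d n - d (n + 1)) atTop (𝓝 0) := by
    simpa using hd_lim.sub (hd_lim.comp (tendsto_add_atTop_nat 1))
  exact squeeze_zero hg (fun n => by linarith [h n]) hdiff

theorem tendsto_zero_of_norm_sq_le {E : Type*} [SeminormedAddCommGroup E] {f : ι → E}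
    {g : ι → ℝ} {l : Filter ι} (hg : Tendsto g l (𝓝 0)) (h : ∀ i, ‖f i‖ ^ 2 ≤ g i) :
    Tendsto f l (𝓝 0) := by
  rw [tendsto_zero_iff_norm_tendsto_zero]
  exact squeeze_zero (fun _ => norm_nonneg _) (fun i => Real.le_sqrt_of_sq_le (h i))
    (by simpa using hg.sqrt)

theorem inner_sub_nonpos_of_forall_norm_sub_le {S : Set H} (hS : Convex ℝ S) {x q : H}
    (hq : q ∈ S) (hmin : ∀ y ∈ S, ‖x - q‖ ≤ ‖x - y‖) : ∀ y ∈ S, ⟪x - q, y - q⟫ ≤ 0 := by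
  have : Nonempty S := ⟨⟨q, hq⟩⟩
  have hbdd : BddBelow (Set.range fun y : S => ‖x - (y : H)‖) :=
    ⟨0, by rintro _ ⟨y, rfl⟩; exact norm_nonneg _⟩
  exact (norm_eq_iInf_iff_real_inner_le_zero hS hq).1
    (le_antisymm (le_ciInf fun y => hmin y y.2) (ciInf_le hbdd ⟨q, hq⟩))

theorem norm_sub_sq_add_norm_sub_sq_le_of_forall_norm_sub_le {S : Set H} (hS : Convex ℝ S)
    {x q z : H} (hq : q ∈ S) (hmin : ∀ y ∈ S, ‖x - q‖ ≤ ‖x - y‖) (hz : z ∈ S) :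
    ‖q - z‖ ^ 2 + ‖q - x‖ ^ 2 ≤ ‖x - z‖ ^ 2 := by
  have hinner := inner_sub_nonpos_of_forall_norm_sub_le hS hq hmin z hz
  have hsplit : x - z = (x - q) - (z - q) := by abel
  rw [norm_sub_rev q z, norm_sub_rev q x, hsplit, norm_sub_sq_real (x - q) (z - q)]
  linarith

def WeakTendsto (u : ι → H) (l : Filter ι) (p : H) : Prop :=
  ∀ w : H, Tendsto (fun i => ⟪u i, w⟫) l (𝓝 ⟪p, w⟫)

namespace WeakTendsto

variable {u v : ι → H} {l : Filter ι} {p : H}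

theorem congr_of_sub_tendsto_zero (h : WeakTendsto u l p)
    (hvu : Tendsto (fun i => v i - u i) l (𝓝 0)) : WeakTendsto v l p := fun w => by
  have hinner : Tendsto (fun i => ⟪v i - u i, w⟫) l (𝓝 0) := by
    simpa using hvu.inner (tendsto_const_nhds (x := w))
  simpa [inner_sub_left] using (h w).add hinner

theorem tendsto_apply [CompleteSpace H] (h : WeakTendsto u l p) (f : StrongDual ℝ H) :
    Tendsto (fun i => f (u i)) l (𝓝 (f p)) := by
  simpa only [real_inner_comm ((InnerProductSpace.toDual ℝ H).symm f),
    InnerProductSpace.toDual_symm_apply] using h ((InnerProductSpace.toDual ℝ H).symm f)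

theorem mem_of_convex_of_isClosed [CompleteSpace H] [l.NeBot] {S : Set H}
    (hSconv : Convex ℝ S) (hSclosed : IsClosed S) (h : WeakTendsto u l p)
    (hu : ∀ᶠ i in l, u i ∈ S) : p ∈ S := by
  by_contra hp
  obtain ⟨f, c, hfp, hfS⟩ := geometric_hahn_banach_point_closed hSconv hSclosed hp
  exact hfp.not_ge (ge_of_tendsto (h.tendsto_apply f) (hu.mono fun i hi => (hfS _ hi).le))

end WeakTendsto

theorem tendsto_inner_sub_of_tendsto_norm_sub {u : ι → H} {l : Filter ι} {p q : H} {a b : ℝ}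
    (hp : Tendsto (fun i => ‖u i - p‖) l (𝓝 a)) (hq : Tendsto (fun i => ‖u i - q‖) l (𝓝 b)) :
    Tendsto (fun i => ⟪u i, p - q⟫) l (𝓝 ((b ^ 2 - a ^ 2 + ‖p‖ ^ 2 - ‖q‖ ^ 2) / 2)) := by
  refine ((((hq.pow 2).sub (hp.pow 2)).add_const _).sub_const _).div_const 2 |>.congr fun i => ?_
  rw [norm_sub_sq_real, norm_sub_sq_real, inner_sub_right]
  ring

theorem WeakTendsto.eq_of_tendsto_norm_sub {u : ι → H} {l U V : Filter ι} [U.NeBot] [V.NeBot]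
    {p q : H} (hp : WeakTendsto u U p) (hq : WeakTendsto u V q) (hU : U ≤ l) (hV : V ≤ l)
    (hdp : ∃ a, Tendsto (fun i => ‖u i - p‖) l (𝓝 a))
    (hdq : ∃ b, Tendsto (fun i => ‖u i - q‖) l (𝓝 b)) : p = q := by
  obtain ⟨a, ha⟩ := hdp
  obtain ⟨b, hb⟩ := hdq
  have hlim := tendsto_inner_sub_of_tendsto_norm_sub ha hb
  have hpU := tendsto_nhds_unique (hp (p - q)) (hlim.mono_left hU)
  have hqV := tendsto_nhds_unique (hq (p - q)) (hlim.mono_left hV)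
  rw [← sub_eq_zero, ← inner_self_eq_zero (𝕜 := ℝ), inner_sub_left, hpU, hqV, sub_self]

/-- Banach–Alaoglu, transported to `H` by the Riesz representation. -/
theorem exists_weakTendsto_of_norm_le [CompleteSpace H] {u : ι → H} {M : ℝ}
    (hu : ∀ i, ‖u i‖ ≤ M) (U : Ultrafilter ι) : ∃ p, WeakTendsto u U p := by
  let φ : ι → WeakDual ℝ H := fun i =>
    StrongDual.toWeakDual (InnerProductSpace.toDual ℝ H (u i))
  have hball : ∀ i, φ i ∈ WeakDual.toStrongDual ⁻¹' Metric.closedBall 0 M := fun i => by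
    simpa [φ, StrongDual.toStrongDual_toWeakDual] using hu i
  obtain ⟨f, -, hf⟩ := (WeakDual.isCompact_closedBall 0 M).ultrafilter_le_nhds (U.map φ)
    (by rw [Ultrafilter.coe_map]; exact tendsto_principal.2 (.of_forall hball))
  refine ⟨(InnerProductSpace.toDual ℝ H).symm (WeakDual.toStrongDual f), fun w => ?_⟩
  rw [InnerProductSpace.toDual_symm_apply]
  exact ((WeakDual.eval_continuous w).tendsto f).comp hf

/-- Opial's lemma, with weak cluster points taken along ultrafilters. -/
theorem exists_weakTendsto_of_antitone_norm_sub [CompleteSpace H] {S : Set H} {u : ℕ → H}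
    (hS : S.Nonempty) (hfejer : ∀ z ∈ S, Antitone fun n => ‖u n - z‖)
    (hcluster : ∀ (U : Ultrafilter ℕ) (p : H), (U : Filter ℕ) ≤ atTop →
      WeakTendsto u U p → p ∈ S) :
    ∃ z ∈ S, WeakTendsto u atTop z := by
  have hdist : ∀ z ∈ S, ∃ a, Tendsto (fun n => ‖u n - z‖) atTop (𝓝 a) := fun z hz =>
    ⟨_, tendsto_atTop_ciInf (hfejer z hz) ⟨0, by rintro _ ⟨n, rfl⟩; exact norm_nonneg _⟩⟩
  obtain ⟨z₀, hz₀⟩ := hS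
  have hbound : ∀ n, ‖u n‖ ≤ ‖z₀‖ + ‖u 0 - z₀‖ := fun n =>
    (norm_le_insert' (u n) z₀).trans (add_le_add_right (hfejer z₀ hz₀ (Nat.zero_le n)) _)
  have hlim : ∀ U : Ultrafilter ℕ, (U : Filter ℕ) ≤ atTop → ∃ p ∈ S, WeakTendsto u U p :=
    fun U hU =>
      let ⟨p, hp⟩ := exists_weakTendsto_of_norm_le hbound U
      ⟨p, hcluster U p hU hp, hp⟩
  obtain ⟨z, hzS, hz⟩ := hlim (Ultrafilter.of atTop) (Ultrafilter.of_le _)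
  refine ⟨z, hzS, fun w => (tendsto_iff_ultrafilter _ _ _).2 fun U hU => ?_⟩
  obtain ⟨p, hpS, hp⟩ := hlim U hU
  rw [← hp.eq_of_tendsto_norm_sub hz hU (Ultrafilter.of_le _) (hdist p hpS) (hdist z hzS)]
  exact hp w

end

theorem alternating_projections_convex_weak_convergence_general
    {H : Type*} [NormedAddCommGroup H] [InnerProductSpace ℝ H] [CompleteSpace H]
    (C D : Set H) (hCclosed : IsClosed C) (hDclosed : IsClosed D)
    (hCconv : Convex ℝ C) (hDconv : Convex ℝ D) (hCD : (C ∩ D).Nonempty)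
    (PC PD : H → H)
    (hPC : ∀ x, PC x ∈ C ∧ ∀ y ∈ C, ‖x - PC x‖ ≤ ‖x - y‖)
    (hPD : ∀ x, PD x ∈ D ∧ ∀ y ∈ D, ‖x - PD x‖ ≤ ‖x - y‖)
    (x : ℕ → H) (hxrec : ∀ m : ℕ, x (m + 1) = PD (PC (x m))) :
    ∃ z ∈ C ∩ D, ∀ w : H,
      Filter.Tendsto (fun m : ℕ => ⟪x m, w⟫) Filter.atTop (nhds ⟪z, w⟫) := by
  have hstep : ∀ z ∈ C ∩ D, ∀ n, ‖x (n + 1) - z‖ ^ 2 +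
      (‖PC (x n) - x n‖ ^ 2 + ‖x (n + 1) - PC (x n)‖ ^ 2) ≤ ‖x n - z‖ ^ 2 := by
    rintro z ⟨hzC, hzD⟩ n
    have hC := norm_sub_sq_add_norm_sub_sq_le_of_forall_norm_sub_le hCconv (hPC (x n)).1
      (hPC (x n)).2 hzC
    have hD := norm_sub_sq_add_norm_sub_sq_le_of_forall_norm_sub_le hDconv (hPD (PC (x n))).1
      (hPD (PC (x n))).2 hzD
    rw [← hxrec n] at hD
    linarith
  obtain ⟨z₀, hz₀⟩ := hCD
  have hgap := tendsto_zero_of_succ_add_le (d := fun n => ‖x n - z₀‖ ^ 2)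
    (g := fun n => ‖PC (x n) - x n‖ ^ 2 + ‖x (n + 1) - PC (x n)‖ ^ 2)
    (fun n => by positivity) (fun n => by positivity) (hstep z₀ hz₀)
  have hgapC : Tendsto (fun n => PC (x n) - x n) atTop (𝓝 0) :=
    tendsto_zero_of_norm_sq_le hgap fun n => le_add_of_nonneg_right (sq_nonneg _)
  have hgapD : Tendsto (fun n => x (n + 1) - PC (x n)) atTop (𝓝 0) :=
    tendsto_zero_of_norm_sq_le hgap fun n => le_add_of_nonneg_left (sq_nonneg _)
  have hfejer : ∀ z ∈ C ∩ D, Antitone fun n => ‖x n - z‖ := fun z hz =>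
    antitone_nat_of_succ_le fun n => (pow_le_pow_iff_left₀ (norm_nonneg _) (norm_nonneg _)
      two_ne_zero).1 (le_of_add_le_of_nonneg_left (hstep z hz n) (by positivity))
  refine exists_weakTendsto_of_antitone_norm_sub ⟨z₀, hz₀⟩ hfejer fun U p hU hp => ?_
  have hpC : WeakTendsto (fun n => PC (x n)) U p :=
    hp.congr_of_sub_tendsto_zero (hgapC.mono_left hU)
  have hpD : WeakTendsto (fun n => x (n + 1)) U p :=
    hpC.congr_of_sub_tendsto_zero (hgapD.mono_left hU)
  exact ⟨hpC.mem_of_convex_of_isClosed hCconv hCclosed (.of_forall fun n => (hPC _).1),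
    hpD.mem_of_convex_of_isClosed hDconv hDclosed (.of_forall fun n => hxrec n ▸ (hPD _).1)⟩

/-- **Weak convergence of alternating projections between convex sets.**  Let `C`, `D` be
closed convex subsets of a real Hilbert space `H` with `C ∩ D ≠ ∅`, and let `PC`, `PD` be the
metric projections onto `C` and `D` (the maps sending a point to its nearest point of the
set).  Then for every starting point `x₀`, the sequence `x_{n+1} = P_D (P_C x_n)` converges
weakly to a point of `C ∩ D`. -/
theorem alternating_projections_convex_weak_convergence
    {H : Type*} [NormedAddCommGroup H] [InnerProductSpace ℝ H] [CompleteSpace H]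
    (C D : Set H) (hCclosed : IsClosed C) (hDclosed : IsClosed D)
    (hCconv : Convex ℝ C) (hDconv : Convex ℝ D) (hCD : (C ∩ D).Nonempty)
    (PC PD : H → H)
    (hPC : ∀ x, PC x ∈ C ∧ ∀ y ∈ C, ‖x - PC x‖ ≤ ‖x - y‖)
    (hPD : ∀ x, PD x ∈ D ∧ ∀ y ∈ D, ‖x - PD x‖ ≤ ‖x - y‖)
    (x₀ : H) (x : ℕ → H) (hx0 : x 0 = x₀) (hxrec : ∀ m : ℕ, x (m + 1) = PD (PC (x m))) :
    ∃ z ∈ C ∩ D, ∀ w : H,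
      Filter.Tendsto (fun m : ℕ => ⟪x m, w⟫) Filter.atTop (nhds ⟪z, w⟫) :=
  alternating_projections_convex_weak_convergence_general C D hCclosed hDclosed hCconv hDconv hCD PC
    PD hPC hPD x hxrec
end

section
/- (Bunt–Motzkin) Let E = ℝⁿ with the Euclidean norm and let S ⊆ E be nonempty. Then every point of E has a unique nearest point in S (i.e., S is a Chebyshev set) if and only if S is closed and convex. -/
/-!
Closed convex sets have unique nearest points by the obtuse-angle criterion. Conversely, let `S`
be a Chebyshev set with nearest-point map `P`; then `S` is closed, and `P` is continuous because
nearest points stay in a compact ball and every cluster value of `P` at `x` is a nearest point of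
`x`. If `a` lies in the relative interior of `conv S`, with `W` the direction of the affine span,
the function `g x = ‖x - a‖² - d(x, S)²` is coercive on `a + W` and so has a minimiser `x` there.
Comparing `g x ≤ g (x + t • v)` through the nearest point of `x + t • v` gives
`⟪v, P (x + t • v) - a⟫ ≥ 0`; letting `t → 0⁺` with `v = a - P x` forces `P x = a`, so `a ∈ S`.
Every point of `conv S` is a limit of such relative interior points, and `S` is closed.
-/

open Metric Set Filter Topology
open scoped RealInnerProductSpace

theorem MapClusterPt.prodMk_nhds {X Y : Type*} [TopologicalSpace X] [TopologicalSpace Y]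
    {f : X → Y} {x : X} {y : Y} (hf : MapClusterPt y (𝓝 x) f) :
    MapClusterPt (x, y) (𝓝 x) fun z => (z, f z) := by
  rw [((𝓝 x).basis_sets.prod_nhds (𝓝 y).basis_sets).mapClusterPt_iff_frequently]
  rintro ⟨U, V⟩ ⟨hU, hV⟩
  exact ((mapClusterPt_iff_frequently.1 hf V hV).and_eventually hU).mono fun z hz => ⟨hz.2, hz.1⟩

def IsChebyshevSet {X : Type*} [PseudoMetricSpace X] (S : Set X) : Prop :=
  ∀ x, ∃! y, y ∈ S ∧ dist x y = infDist x S

namespace IsChebyshevSet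

variable {X : Type*} [MetricSpace X] {S : Set X}

noncomputable def proj (h : IsChebyshevSet S) (x : X) : X :=
  (h x).exists.choose

theorem proj_mem (h : IsChebyshevSet S) (x : X) : h.proj x ∈ S :=
  (h x).exists.choose_spec.1

theorem dist_proj (h : IsChebyshevSet S) (x : X) : dist x (h.proj x) = infDist x S :=
  (h x).exists.choose_spec.2

theorem eq_proj (h : IsChebyshevSet S) {x y : X} (hy : y ∈ S) (hxy : dist x y = infDist x S) :
    y = h.proj x :=
  (h x).unique ⟨hy, hxy⟩ (h x).exists.choose_spec

theorem isClosed (h : IsChebyshevSet S) : IsClosed S := by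
  refine isClosed_of_closure_subset fun x hx => ?_
  have : dist x (h.proj x) = 0 := by rw [h.dist_proj, infDist_zero_of_mem_closure hx]
  rw [dist_eq_zero.1 this]
  exact h.proj_mem x

theorem continuous_proj [ProperSpace X] (h : IsChebyshevSet S) : Continuous h.proj := by
  refine continuous_iff_continuousAt.2 fun x => ?_
  refine (isCompact_closedBall x (infDist x S + 2)).tendsto_nhds_of_unique_mapClusterPt ?_ ?_
  · filter_upwards [ball_mem_nhds x one_pos] with y hy
    rw [mem_ball] at hy
    have := infDist_le_infDist_add_dist (s := S) (x := y) (y := x)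
    rw [mem_closedBall, dist_comm]
    linarith [dist_triangle x y (h.proj y), h.dist_proj y, dist_comm x y]
  · intro q _ hq
    have hqS : q ∈ S := h.isClosed.mem_of_mapClusterPt hq (.of_forall h.proj_mem)
    have hG : IsClosed {p : X × X | dist p.1 p.2 ≤ infDist p.1 S} :=
      isClosed_le (continuous_fst.dist continuous_snd)
        ((continuous_infDist_pt S).comp continuous_fst)
    have hle : dist x q ≤ infDist x S :=
      hG.mem_of_mapClusterPt hq.prodMk_nhds (.of_forall fun y => (h.dist_proj y).le)
    exact h.eq_proj hqS (hle.antisymm (infDist_le_dist_of_mem hqS))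

end IsChebyshevSet

section InnerProductSpace

variable {E : Type*} [NormedAddCommGroup E] [InnerProductSpace ℝ E] {S : Set E}

theorem dist_eq_infDist_iff_inner_le_zero (hS : Convex ℝ S) {x y : E} (hy : y ∈ S) :
    dist x y = infDist x S ↔ ∀ w ∈ S, ⟪x - y, w - y⟫ ≤ 0 := by
  simp only [infDist_eq_iInf, dist_eq_norm]
  exact norm_eq_iInf_iff_real_inner_le_zero hS hy

theorem Convex.isChebyshevSet [CompleteSpace E] (hne : S.Nonempty) (hcl : IsClosed S)
    (hcv : Convex ℝ S) : IsChebyshevSet S := by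
  intro x
  obtain ⟨y, hy, hxy⟩ := exists_norm_eq_iInf_of_complete_convex hne hcl.isComplete hcv x
  have hy' : dist x y = infDist x S := by simpa only [infDist_eq_iInf, dist_eq_norm] using hxy
  refine ⟨y, ⟨hy, hy'⟩, fun z ⟨hz, hz'⟩ => ?_⟩
  have h₁ := (dist_eq_infDist_iff_inner_le_zero hcv hy).1 hy' z hz
  have h₂ := (dist_eq_infDist_iff_inner_le_zero hcv hz).1 hz' y hy
  have : ‖z - y‖ ^ 2 = ⟪x - y, z - y⟫ + ⟪x - z, y - z⟫ := by
    rw [← real_inner_self_eq_norm_sq]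
    simp only [inner_sub_left, inner_sub_right, real_inner_comm]
    ring
  have hzy : ‖z - y‖ ^ 2 ≤ 0 := by linarith
  simpa [sub_eq_zero] using hzy

theorem exists_mem_inner_le_of_mem_convexHull {p : E} (hp : p ∈ convexHull ℝ S) (v : E) :
    ∃ s ∈ S, ⟪v, p⟫ ≤ ⟪v, s⟫ :=
  ((innerₛₗ ℝ v).convexOn convex_univ).exists_ge_of_mem_convexHull (subset_univ S) hp

end InnerProductSpace

section SqDistGap

variable {E : Type*} [NormedAddCommGroup E] {S : Set E}

/-- When `S` is a Chebyshev set, the gradient of `sqDistGap S a` at `x` is `2 (proj x - a)`. -/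
noncomputable def sqDistGap (S : Set E) (a x : E) : ℝ :=
  ‖x - a‖ ^ 2 - infDist x S ^ 2

theorem continuous_sqDistGap (S : Set E) (a : E) : Continuous (sqDistGap S a) := by
  unfold sqDistGap
  have := continuous_infDist_pt S
  fun_prop

variable [InnerProductSpace ℝ E]

theorem norm_sub_sq_sub_norm_sub_sq (x a s : E) :
    ‖x - a‖ ^ 2 - ‖x - s‖ ^ 2 = 2 * ⟪x - a, s - a⟫ - ‖s - a‖ ^ 2 := by
  rw [show x - s = (x - a) - (s - a) by abel, norm_sub_sq_real (x - a)]
  ring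

theorem two_inner_sub_le_sqDistGap {a x s : E} (hs : s ∈ S) :
    2 * ⟪x - a, s - a⟫ - ‖s - a‖ ^ 2 ≤ sqDistGap S a x := by
  rw [sqDistGap, ← norm_sub_sq_sub_norm_sub_sq, ← dist_eq_norm x s]
  gcongr
  · exact infDist_nonneg
  · exact infDist_le_dist_of_mem hs

theorem sqDistGap_eq {a x q : E} (hq : dist x q = infDist x S) :
    sqDistGap S a x = 2 * ⟪x - a, q - a⟫ - ‖q - a‖ ^ 2 := by
  rw [sqDistGap, ← norm_sub_sq_sub_norm_sub_sq, ← dist_eq_norm x q, hq]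

theorem IsChebyshevSet.inner_proj_sub_nonneg [ProperSpace E] (h : IsChebyshevSet S) {a x v : E}
    (hmin : ∀ t : ℝ, 0 < t → sqDistGap S a x ≤ sqDistGap S a (x + t • v)) :
    0 ≤ ⟪v, h.proj x - a⟫ := by
  have hstep : ∀ t : ℝ, 0 < t → 0 ≤ ⟪v, h.proj (x + t • v) - a⟫ := by
    intro t ht
    set y := x + t • v with hy
    have h₁ := two_inner_sub_le_sqDistGap (a := a) (x := x) (h.proj_mem y)
    have h₂ := sqDistGap_eq (a := a) (h.dist_proj y)
    have : 0 ≤ t * ⟪v, h.proj y - a⟫ := by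
      rw [← real_inner_smul_left, show t • v = (y - a) - (x - a) by rw [hy]; abel, inner_sub_left]
      linarith [hmin t ht]
    exact nonneg_of_mul_nonneg_right this ht
  have hcont : Continuous fun t : ℝ => ⟪v, h.proj (x + t • v) - a⟫ := by
    have := h.continuous_proj
    fun_prop
  have hlim := (hcont.tendsto 0).mono_left (nhdsWithin_le_nhds (s := Ioi 0))
  simp only [zero_smul, add_zero] at hlim
  exact ge_of_tendsto hlim (eventually_nhdsWithin_of_forall hstep)

end SqDistGap

section Coercive

variable {E : Type*} [NormedAddCommGroup E] [InnerProductSpace ℝ E] [FiniteDimensional ℝ E]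
  {S : Set E} {W : Submodule ℝ E} {a : E} {ε : ℝ}

/-- Each unit vector `u ∈ W` sees some point of `S` at height `ε / 2` above `a`, because
`a + (ε / 2) • u ∈ convexHull ℝ S`; compactness of the unit sphere of `W` makes finitely many
points suffice. -/
theorem exists_finset_forall_inner_ge (hε : 0 < ε)
    (hW : ∀ w ∈ W, ‖w‖ < ε → a + w ∈ convexHull ℝ S) :
    ∃ F : Finset E, ↑F ⊆ S ∧ ∀ w ∈ W, w ≠ 0 → ∃ s ∈ F, ε / 4 * ‖w‖ ≤ ⟪w, s - a⟫ := by
  have hK : IsCompact ((W : Set E) ∩ sphere 0 1) :=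
    (isCompact_sphere 0 1).inter_left W.closed_of_finiteDimensional
  have hcover : (W : Set E) ∩ sphere 0 1 ⊆ ⋃ s ∈ S, {u | ε / 4 < ⟪u, s - a⟫} := by
    rintro u ⟨huW, hu⟩
    rw [mem_sphere_zero_iff_norm] at hu
    have hmem : a + (ε / 2) • u ∈ convexHull ℝ S := hW _ (W.smul_mem _ huW) <| by
      rw [norm_smul, hu, Real.norm_of_nonneg (half_pos hε).le]
      linarith
    obtain ⟨s, hs, hle⟩ := exists_mem_inner_le_of_mem_convexHull hmem u
    rw [inner_add_right, real_inner_smul_right, real_inner_self_eq_norm_sq, hu] at hle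
    exact mem_biUnion hs (by rw [mem_ofPred_eq, inner_sub_right]; linarith)
  obtain ⟨F, hFS, hF, hKF⟩ := hK.elim_finite_subcover_image
    (fun s _ => isOpen_lt continuous_const (continuous_id.inner continuous_const)) hcover
  simp only [id] at hKF
  refine ⟨hF.toFinset, by simpa using hFS, fun w hw hw0 => ?_⟩
  have hnorm : 0 < ‖w‖ := norm_pos_iff.2 hw0
  have hu : ‖w‖⁻¹ • w ∈ (W : Set E) ∩ sphere 0 1 :=
    ⟨W.smul_mem _ hw, by rw [mem_sphere_zero_iff_norm, norm_smul, norm_inv, norm_norm,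
      inv_mul_cancel₀ hnorm.ne']⟩
  obtain ⟨s, hs, hlt⟩ := mem_iUnion₂.1 (hKF hu)
  refine ⟨s, hF.mem_toFinset.2 hs, ?_⟩
  rw [mem_ofPred_eq, real_inner_smul_left, lt_inv_mul_iff₀ hnorm] at hlt
  linarith

theorem exists_forall_sqDistGap_ge (hε : 0 < ε)
    (hW : ∀ w ∈ W, ‖w‖ < ε → a + w ∈ convexHull ℝ S) :
    ∃ M, ∀ w ∈ W, ε / 2 * ‖w‖ - M ≤ sqDistGap S a (a + w) := by
  obtain ⟨F, hFS, hF⟩ := exists_finset_forall_inner_ge hε hW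
  have hsum : 0 ≤ ∑ s ∈ F, ‖s - a‖ ^ 2 := by positivity
  refine ⟨infDist a S ^ 2 + ∑ s ∈ F, ‖s - a‖ ^ 2, fun w hw => ?_⟩
  rcases eq_or_ne w 0 with rfl | hw0
  · simp [sqDistGap, hsum]
  obtain ⟨s, hs, hle⟩ := hF w hw hw0
  have h₁ := two_inner_sub_le_sqDistGap (a := a) (x := a + w) (hFS hs)
  have h₂ : ‖s - a‖ ^ 2 ≤ ∑ s ∈ F, ‖s - a‖ ^ 2 :=
    Finset.single_le_sum (f := fun s => ‖s - a‖ ^ 2) (fun _ _ => by positivity) hs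
  rw [add_sub_cancel_left] at h₁
  nlinarith [sq_nonneg (infDist a S)]

theorem exists_forall_sqDistGap_le (hε : 0 < ε)
    (hW : ∀ w ∈ W, ‖w‖ < ε → a + w ∈ convexHull ℝ S) :
    ∃ w₀ ∈ W, ∀ w ∈ W, sqDistGap S a (a + w₀) ≤ sqDistGap S a (a + w) := by
  obtain ⟨M, hM⟩ := exists_forall_sqDistGap_ge hε hW
  have hcont : Continuous fun w : W => sqDistGap S a (a + w) :=
    (continuous_sqDistGap S a).comp (continuous_const.add continuous_subtype_val)
  have htend : Tendsto (fun w : W => sqDistGap S a (a + w)) (cocompact W) atTop := by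
    refine tendsto_atTop_mono (fun w => hM w w.2) ?_
    exact tendsto_atTop_add_const_right _ _
      (tendsto_norm_cocompact_atTop.const_mul_atTop (half_pos hε))
  obtain ⟨w₀, hw₀⟩ := hcont.exists_forall_le htend
  exact ⟨w₀, w₀.2, fun w hw => hw₀ ⟨w, hw⟩⟩

theorem IsChebyshevSet.mem_of_forall_add_mem_convexHull (h : IsChebyshevSet S)
    (hSW : ∀ s ∈ S, s - a ∈ W) (hε : 0 < ε) (hW : ∀ w ∈ W, ‖w‖ < ε → a + w ∈ convexHull ℝ S) :
    a ∈ S := by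
  obtain ⟨w₀, hw₀, hmin⟩ := exists_forall_sqDistGap_le hε hW
  set x := a + w₀
  have hv : a - h.proj x ∈ W := by
    simpa using W.neg_mem (hSW _ (h.proj_mem x))
  have hineq := h.inner_proj_sub_nonneg (a := a) (x := x) (v := a - h.proj x) fun t _ => by
    rw [add_assoc]
    exact hmin _ (W.add_mem hw₀ (W.smul_mem t hv))
  rw [← neg_sub, inner_neg_left, real_inner_self_eq_norm_sq, neg_nonneg] at hineq
  have : h.proj x = a := by simpa [sub_eq_zero] using hineq
  exact this ▸ h.proj_mem x

end Coercive

section RelativeInterior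

variable {E : Type*} [NormedAddCommGroup E] [NormedSpace ℝ E] {C : Set E}

theorem Convex.exists_forall_add_mem [FiniteDimensional ℝ E] (hC : Convex ℝ C)
    (hne : C.Nonempty) : ∃ z, ∃ ε > 0, ∀ w ∈ vectorSpan ℝ C, ‖w‖ < ε → z + w ∈ C := by
  obtain ⟨z, hz⟩ := hne.intrinsicInterior hC
  obtain ⟨z', hz', rfl⟩ := mem_intrinsicInterior.1 hz
  obtain ⟨ε, hε, hball⟩ := Metric.isOpen_iff.1 isOpen_interior z' hz'
  refine ⟨z', ε, hε, fun w hw hwε => ?_⟩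
  rw [← direction_affineSpan] at hw
  have hmem : z' + w ∈ affineSpan ℝ C := by
    simpa [add_comm] using AffineSubspace.vadd_mem_of_mem_direction hw z'.2
  have : (⟨z' + w, hmem⟩ : affineSpan ℝ C) ∈ ball z' ε := by
    rwa [mem_ball, Subtype.dist_eq, dist_eq_norm, add_sub_cancel_left]
  exact interior_subset (s := Subtype.val ⁻¹' C) (hball this)

theorem Convex.add_smul_sub_add_mem {W : Submodule ℝ E} {p z : E} {ε t : ℝ} (hC : Convex ℝ C)
    (hp : p ∈ C) (hz : ∀ w ∈ W, ‖w‖ < ε → z + w ∈ C) (ht₀ : 0 < t) (ht₁ : t ≤ 1) :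
    ∀ w ∈ W, ‖w‖ < t * ε → p + t • (z - p) + w ∈ C := by
  intro w hw hwε
  have hzw : z + t⁻¹ • w ∈ C := hz _ (W.smul_mem _ hw) <| by
    rwa [norm_smul, Real.norm_of_nonneg (inv_nonneg.2 ht₀.le), inv_mul_lt_iff₀ ht₀]
  have : p + t • (z - p) + w = (1 - t) • p + t • (z + t⁻¹ • w) := by
    rw [smul_add, smul_smul, mul_inv_cancel₀ ht₀.ne', one_smul]
    module
  exact this ▸ hC hp hzw (by linarith) ht₀.le (by ring)

end RelativeInterior

theorem IsChebyshevSet.convex {E : Type*} [NormedAddCommGroup E] [InnerProductSpace ℝ E]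
    [FiniteDimensional ℝ E] {S : Set E} (h : IsChebyshevSet S) : Convex ℝ S := by
  have hC := convex_convexHull ℝ S
  have hne : (convexHull ℝ S).Nonempty := ⟨_, subset_convexHull ℝ S (h.proj_mem 0)⟩
  obtain ⟨z, ε, hε, hz⟩ := hC.exists_forall_add_mem hne
  suffices convexHull ℝ S ⊆ S from convexHull_eq_self.1 (this.antisymm (subset_convexHull ℝ S))
  intro p hp
  have hseg : ∀ t ∈ Ioc (0 : ℝ) 1, p + t • (z - p) ∈ S := by
    rintro t ⟨ht₀, ht₁⟩
    have hcomb : p + t • (z - p) ∈ convexHull ℝ S := by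
      simpa using hC.add_smul_sub_add_mem hp hz ht₀ ht₁ 0 (zero_mem _) (by simp; positivity)
    refine h.mem_of_forall_add_mem_convexHull (fun s hs => ?_) (mul_pos ht₀ hε)
      (hC.add_smul_sub_add_mem hp hz ht₀ ht₁)
    exact vsub_mem_vectorSpan ℝ (subset_convexHull ℝ S hs) hcomb
  have hlim : Tendsto (fun t : ℝ => p + t • (z - p)) (𝓝[>] 0) (𝓝 p) := by
    have : Continuous fun t : ℝ => p + t • (z - p) := by fun_prop
    simpa using (this.tendsto 0).mono_left nhdsWithin_le_nhds
  exact h.isClosed.mem_of_tendsto hlim (mem_of_superset (Ioc_mem_nhdsGT one_pos) hseg)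

/-- **Bunt–Motzkin theorem.**  A nonempty subset `S` of Euclidean space `ℝⁿ` is a Chebyshev
set (every point has a unique nearest point in `S`) if and only if `S` is closed and
convex. -/
theorem bunt_motzkin (n : ℕ) (S : Set (EuclideanSpace ℝ (Fin n))) (hS : S.Nonempty) :
    (∀ x : EuclideanSpace ℝ (Fin n), ∃! y, y ∈ S ∧ dist x y = Metric.infDist x S) ↔
      (IsClosed S ∧ Convex ℝ S) :=
  ⟨fun h => ⟨IsChebyshevSet.isClosed h, IsChebyshevSet.convex h⟩,
    fun ⟨hcl, hcv⟩ => hcv.isChebyshevSet hS hcl⟩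
end

section
/- There exists a nonnegative real matrix whose nonnegative rank is strictly larger than its rank; e.g., the 4×4 matrix X with rows (1,1,0,0), (1,0,1,0), (0,1,0,1), (0,0,1,1) satisfies rank(X) = 3 but X cannot be written as a sum of 3 entrywise nonnegative rank-one matrices (its nonnegative rank is 4). -/
/-!
The support of `exampleMatrix` is the edge set of an 8-cycle between rows and columns, so it
contains no all-positive `2 × 2` submatrix. In a nonnegative factorization `X = ∑ i, u i ⊗ v i`
the support of `X` is the union of the rectangles `supp (u i) × supp (v i)`, each contained in
the support of `X` and hence covering at most 2 of its 8 positive entries; three terms cover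
at most 6. The rank is 3 because row 0 - row 1 - row 2 + row 3 = 0 while the leading `3 × 3`
minor is nonzero.
-/

/-- The 4×4 nonnegative matrix with rows `(1,1,0,0)`, `(1,0,1,0)`, `(0,1,0,1)`, `(0,0,1,1)`. -/
def exampleMatrix : Matrix (Fin 4) (Fin 4) ℝ :=
  !![1, 1, 0, 0;
     1, 0, 1, 0;
     0, 1, 0, 1;
     0, 0, 1, 1]

open Finset

section NonnegFactorization

variable {R m n ι : Type*} [Semiring R] [LinearOrder R] [IsStrictOrderedRing R] [Fintype ι]

theorem exists_nonneg_factorization [Fintype m] [DecidableEq m] {X : Matrix m n R}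
    (hX : ∀ a b, 0 ≤ X a b) :
    ∃ (u : m → m → R) (v : m → n → R), (∀ i a, 0 ≤ u i a) ∧ (∀ i b, 0 ≤ v i b) ∧
      ∀ a b, X a b = ∑ i, u i a * v i b :=
  ⟨fun i a => if a = i then 1 else 0, X, fun i a => by dsimp only; split_ifs <;> simp, hX,
    fun a b => by simp [ite_mul]⟩

theorem mul_pos_iff_of_nonneg_left {x y : R} (hx : 0 ≤ x) : 0 < x * y ↔ 0 < x ∧ 0 < y :=
  ⟨fun h => (pos_and_pos_or_neg_and_neg_of_mul_pos h).resolve_right fun h' => h'.1.not_ge hx,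
    fun h => mul_pos h.1 h.2⟩

theorem sum_mul_pos_iff {u : ι → m → R} {v : ι → n → R} (hu : ∀ i a, 0 ≤ u i a)
    (hv : ∀ i b, 0 ≤ v i b) (a : m) (b : n) :
    0 < ∑ i, u i a * v i b ↔ ∃ i, 0 < u i a ∧ 0 < v i b := by
  rw [sum_pos_iff_of_nonneg fun i _ => mul_nonneg (hu i a) (hv i b)]
  simp only [mem_univ, true_and, mul_pos_iff_of_nonneg_left (hu _ a)]

/-- The rectangle covering bound on the nonnegative rank. -/
theorem card_support_le_of_nonneg_factorization [Fintype m] [Fintype n] [DecidableEq m]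
    [DecidableEq n] {X : Matrix m n R} {S : Finset (m × n)} (hS : ∀ a b, 0 < X a b ↔ (a, b) ∈ S)
    {k : ℕ} (hrect : ∀ (A : Finset m) (B : Finset n), A ×ˢ B ⊆ S → #A * #B ≤ k)
    {u : ι → m → R} {v : ι → n → R} (hu : ∀ i a, 0 ≤ u i a) (hv : ∀ i b, 0 ≤ v i b)
    (hX : ∀ a b, X a b = ∑ i, u i a * v i b) :
    #S ≤ Fintype.card ι * k := by
  set rect : ι → Finset (m × n) := fun i =>
    ({a | 0 < u i a} : Finset m) ×ˢ ({b | 0 < v i b} : Finset n)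
  have hS_eq : S = univ.biUnion rect := by
    ext ⟨a, b⟩
    simp [rect, ← hS, hX, sum_mul_pos_iff hu hv]
  have hrect_le (i : ι) : #(rect i) ≤ k := by
    rw [card_product]
    exact hrect _ _ (hS_eq ▸ subset_biUnion_of_mem rect (mem_univ i))
  calc #S ≤ ∑ i, #(rect i) := hS_eq ▸ card_biUnion_le
    _ ≤ Fintype.card ι * k := by simpa using sum_le_card_nsmul univ _ k fun i _ => hrect_le i

end NonnegFactorization

theorem exampleMatrix_eq_mul :
    exampleMatrix = (!![1, 1, 0; 1, 0, 1; 0, 1, 0; 0, 0, 1] : Matrix (Fin 4) (Fin 3) ℝ) *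
      (!![1, 0, 0, -1; 0, 1, 0, 1; 0, 0, 1, 1] : Matrix (Fin 3) (Fin 4) ℝ) := by
  ext i j
  fin_cases i <;> fin_cases j <;> simp [exampleMatrix, Matrix.mul_apply, Fin.sum_univ_succ]

theorem rank_exampleMatrix_le : exampleMatrix.rank ≤ 3 := by
  rw [exampleMatrix_eq_mul]
  exact (Matrix.rank_mul_le_left _ _).trans (by simpa using Matrix.rank_le_width _)

theorem det_submatrix_exampleMatrix_ne_zero :
    (exampleMatrix.submatrix Fin.castSucc Fin.castSucc).det ≠ 0 := by
  simp [Matrix.det_fin_three, exampleMatrix]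

theorem le_rank_exampleMatrix : 3 ≤ exampleMatrix.rank := by
  have h := Matrix.rank_submatrix_le exampleMatrix (Fin.castSucc : Fin 3 → Fin 4) Fin.castSucc
  rwa [Matrix.rank_of_isUnit _ ((Matrix.isUnit_iff_isUnit_det _).2
    det_submatrix_exampleMatrix_ne_zero.isUnit), Fintype.card_fin] at h

theorem rank_exampleMatrix : exampleMatrix.rank = 3 :=
  le_antisymm rank_exampleMatrix_le le_rank_exampleMatrix

theorem exampleMatrix_nonneg (a b : Fin 4) : 0 ≤ exampleMatrix a b := by
  fin_cases a <;> fin_cases b <;> simp [exampleMatrix]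

def exampleSupport : Finset (Fin 4 × Fin 4) :=
  {(0, 0), (0, 1), (1, 0), (1, 2), (2, 1), (2, 3), (3, 2), (3, 3)}

theorem exampleMatrix_pos_iff (a b : Fin 4) :
    0 < exampleMatrix a b ↔ (a, b) ∈ exampleSupport := by
  fin_cases a <;> fin_cases b <;> simp [exampleMatrix, exampleSupport]

theorem card_mul_card_le_of_product_subset_exampleSupport :
    ∀ (A B : Finset (Fin 4)), A ×ˢ B ⊆ exampleSupport → #A * #B ≤ 2 := by
  decide

/-- There is a nonnegative matrix whose nonnegative rank exceeds its rank: the 4×4 matrix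
with rows `(1,1,0,0)`, `(1,0,1,0)`, `(0,1,0,1)`, `(0,0,1,1)` is entrywise nonnegative, has
rank 3, cannot be written as a sum of 3 entrywise nonnegative rank-one matrices, but can be
written as a sum of 4 such matrices (so its nonnegative rank is 4 > 3). -/
theorem nonneg_rank_gt_rank_example :
    (∀ i j, 0 ≤ exampleMatrix i j) ∧
    exampleMatrix.rank = 3 ∧
    (¬ ∃ (u v : Fin 3 → Fin 4 → ℝ),
      (∀ i j, 0 ≤ u i j) ∧ (∀ i j, 0 ≤ v i j) ∧
      ∀ a b, exampleMatrix a b = ∑ i, u i a * v i b) ∧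
    (∃ (u v : Fin 4 → Fin 4 → ℝ),
      (∀ i j, 0 ≤ u i j) ∧ (∀ i j, 0 ≤ v i j) ∧
      ∀ a b, exampleMatrix a b = ∑ i, u i a * v i b) := by
  refine ⟨exampleMatrix_nonneg, rank_exampleMatrix, ?_,
    exists_nonneg_factorization exampleMatrix_nonneg⟩
  rintro ⟨u, v, hu, hv, hX⟩
  have hcard := card_support_le_of_nonneg_factorization exampleMatrix_pos_iff
    card_mul_card_le_of_product_subset_exampleSupport hu hv hX
  simp [exampleSupport] at hcard
end
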